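/- arXiv:2511.21986 — 6 statements merged into one kernel-verified Lean document; each statement's English description precedes it below -/
import Mathlib

section
/- For every integer k ≥ 1 and every real X > 0, (1/k)·(X^(2k) + X^(-2k)) - 2/k = ∑_{j=1}^{k} (1/j)·C(k+j-1, 2j-1)·(X - 1/X)^(2j), where C(·,·) denotes a binomial coefficient. -/
open Finset Nat

lemma dd_zero_rec' (n : ℕ) : ((n:ℝ)+2)^2 = 2 + 2*((n:ℝ)+1)^2 - (n:ℝ)^2 := by ring

noncomputable def dd (m i : ℕ) : ℝ := ((m : ℝ) / (i+1 : ℝ)) * (Nat.choose (m+i) (2*i+1) : ℝ)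

lemma dd_eq_zero (m i : ℕ) (h : m ≤ i) : dd m i = 0 := by
  unfold dd
  rw [Nat.choose_eq_zero_of_lt (by omega)]
  simp

lemma dd_zero_rec (n : ℕ) : dd (n+2) 0 = 2 + 2 * dd (n+1) 0 - dd n 0 := by
  unfold dd
  simp [Nat.choose_one_right]
  push_cast
  ring

lemma dd_gen (i m : ℕ) :
    ((i+m+4:ℝ)/(i+2)) * (Nat.choose (2*i+m+5) (2*i+3) : ℝ) =
    ((i+m+3:ℝ)/(i+1)) * (Nat.choose (2*i+m+3) (2*i+1) : ℝ) +
    2*(((i+m+3:ℝ)/(i+2)) * (Nat.choose (2*i+m+4) (2*i+3) : ℝ)) -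
    ((i+m+2:ℝ)/(i+2)) * (Nat.choose (2*i+m+3) (2*i+3) : ℝ) := by
  rw [Nat.cast_choose ℝ (by omega), Nat.cast_choose ℝ (by omega),
    Nat.cast_choose ℝ (by omega), Nat.cast_choose ℝ (by omega)]
  have h1 : 2*i+m+5 - (2*i+3) = m+2 := by omega
  have h2 : 2*i+m+3 - (2*i+1) = m+2 := by omega
  have h3 : 2*i+m+4 - (2*i+3) = m+1 := by omega
  have h4 : 2*i+m+3 - (2*i+3) = m := by omega
  rw [h1, h2, h3, h4]
  have f1 : ((2*i+m+5)! : ℝ) = (2*i+m+5)*((2*i+m+4)*((2*i+m+3)! : ℝ)) := by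
    rw [show 2*i+m+5 = (2*i+m+4)+1 by omega, Nat.factorial_succ,
      show 2*i+m+4 = (2*i+m+3)+1 by omega, Nat.factorial_succ]
    push_cast; ring
  have f2 : ((2*i+m+4)! : ℝ) = (2*i+m+4)*((2*i+m+3)! : ℝ) := by
    rw [show 2*i+m+4 = (2*i+m+3)+1 by omega, Nat.factorial_succ]; push_cast; ring
  have f3 : ((2*i+3)! : ℝ) = (2*i+3)*((2*i+2)*((2*i+1)! : ℝ)) := by
    rw [show 2*i+3 = (2*i+2)+1 by omega, Nat.factorial_succ,
      show 2*i+2 = (2*i+1)+1 by omega, Nat.factorial_succ]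
    push_cast; ring
  have f4 : ((m+2)! : ℝ) = (m+2)*((m+1)*((m)! : ℝ)) := by
    rw [Nat.factorial_succ, Nat.factorial_succ]; push_cast; ring
  have f5 : ((m+1)! : ℝ) = (m+1)*((m)! : ℝ) := by
    rw [Nat.factorial_succ]; push_cast; ring
  rw [f1, f2, f3, f4, f5]
  have n1 : ((2*i+m+3)! : ℝ) ≠ 0 := by positivity
  have n2 : ((2*i+1)! : ℝ) ≠ 0 := by positivity
  have n3 : ((m)! : ℝ) ≠ 0 := by positivity
  have n4 : (i:ℝ)+1 ≠ 0 := by positivity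
  have n5 : (i:ℝ)+2 ≠ 0 := by positivity
  field_simp
  ring


lemma dd_rec (k i : ℕ) (hik : i ≤ k) :
    dd (k+2) (i+1) = dd (k+1) i + 2 * dd (k+1) (i+1) - dd k (i+1) := by
  rcases Nat.lt_or_ge i (k-1) with h | h
  · -- generic: i ≤ k - 2, set m := k - i - 2
    obtain ⟨m, rfl⟩ : ∃ m, k = i + m + 2 := ⟨k - i - 2, by omega⟩
    unfold dd
    have e1 : (i+m+2)+2+(i+1) = 2*i+m+5 := by omega
    have e2 : 2*(i+1)+1 = 2*i+3 := by omega
    have e3 : (i+m+2)+1+i = 2*i+m+3 := by omega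
    have e4 : (i+m+2)+1+(i+1) = 2*i+m+4 := by omega
    have e5 : (i+m+2)+(i+1) = 2*i+m+3 := by omega
    rw [e1, e2, e3, e4, e5]
    have := dd_gen i m
    push_cast at this ⊢
    convert this using 2 <;> push_cast <;> ring_nf
  · rcases Nat.lt_or_ge i k with h2 | h2
    · -- i = k - 1, k = i+1
      obtain rfl : k = i + 1 := by omega
      unfold dd
      have c1 : (i + 1 + 2 + (i + 1)).choose (2 * (i + 1) + 1) = 2*i+4 := by
        rw [show i+1+2+(i+1) = (2*i+3)+1 by omega, show 2*(i+1)+1 = 2*i+3 by omega,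
          Nat.choose_succ_self_right]
      have c2 : (i + 1 + 1 + i).choose (2 * i + 1) = 2*i+2 := by
        rw [show i+1+1+i = (2*i+1)+1 by omega, Nat.choose_succ_self_right]
      have c3 : (i + 1 + 1 + (i + 1)).choose (2 * (i + 1) + 1) = 1 := by
        rw [show i+1+1+(i+1) = 2*i+3 by omega, show 2*(i+1)+1 = 2*i+3 by omega, Nat.choose_self]
      have c4 : (i + 1 + (i + 1)).choose (2 * (i + 1) + 1) = 0 := by
        apply Nat.choose_eq_zero_of_lt; omega
      rw [c1, c2, c3, c4]
      have n4 : (i:ℝ)+1 ≠ 0 := by positivity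
      have n5 : (i:ℝ)+1+1 ≠ 0 := by positivity
      push_cast
      field_simp
      ring
    · -- i = k
      rw [show k = i by omega]
      unfold dd
      have c1 : (i + 2 + (i + 1)).choose (2 * (i + 1) + 1) = 1 := by
        rw [show i+2+(i+1) = 2*i+3 by omega, show 2*(i+1)+1 = 2*i+3 by omega, Nat.choose_self]
      have c2 : (i + 1 + i).choose (2 * i + 1) = 1 := by
        rw [show i+1+i = 2*i+1 by omega, Nat.choose_self]
      have c3 : (i + 1 + (i + 1)).choose (2 * (i + 1) + 1) = 0 := by
        apply Nat.choose_eq_zero_of_lt; omega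
      have c4 : (i + (i + 1)).choose (2 * (i + 1) + 1) = 0 := by
        apply Nat.choose_eq_zero_of_lt; omega
      rw [c1, c2, c3, c4]
      have n4 : (i:ℝ)+1 ≠ 0 := by positivity
      have n5 : (i:ℝ)+1+1 ≠ 0 := by positivity
      push_cast
      field_simp
      ring

lemma cheb_main (t : ℝ) (ht : t ≠ 0) : ∀ (k : ℕ),
    t^k + (t^k)⁻¹ - 2 = ∑ i ∈ Finset.range k, dd k i * (t + t⁻¹ - 2)^(i+1) := by
  have key : ∀ (m : ℕ) (c : ℕ → ℝ), ∑ i ∈ Finset.range (m+1), c i * (t + t⁻¹ - 2)^(i+1)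
      = c 0 * (t + t⁻¹ - 2) + ∑ i ∈ Finset.range m, c (i+1) * ((t + t⁻¹ - 2)^(i+1) * (t + t⁻¹ - 2)) := by
    intro m c
    rw [Finset.sum_range_succ']
    simp only [pow_succ, pow_zero, one_mul]
    exact add_comm _ _
  intro k
  induction k using Nat.strong_induction_on with
  | _ k ih =>
    rcases k with _ | _ | n
    · norm_num
    · simp [dd]
    · have A := ih (n+1) (by omega)
      have B := ih n (by omega)
      set s : ℝ := t + t⁻¹ - 2 with hs
      have hL : t^(n+2) + (t^(n+2))⁻¹ - 2
          = s*(t^(n+1) + (t^(n+1))⁻¹ - 2) + 2*(t^(n+1)+(t^(n+1))⁻¹-2) - (t^n + (t^n)⁻¹ - 2) + 2*s := by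
        rw [hs]
        field_simp
        ring
      rw [hL, A, B]
      have hdd1 : dd (n+1) (n+1) = 0 := dd_eq_zero _ _ le_rfl
      have hdd0' : dd n (n+1) = 0 := dd_eq_zero _ _ (by omega)
      have hT0ext : ∑ i ∈ range n, dd n i * s^(i+1) = ∑ i ∈ range (n+1), dd n i * s^(i+1) := by
        rw [Finset.sum_range_succ, dd_eq_zero n n le_rfl]; ring
      have e1 : ∑ i ∈ range (n+2), dd (n+2) i * s^(i+1)
          = dd (n+2) 0 * s + ∑ i ∈ range (n+1), dd (n+2) (i+1) * (s^(i+1)*s) := key (n+1) _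
      have e2 : ∑ i ∈ range (n+1), dd (n+1) i * s^(i+1)
          = dd (n+1) 0 * s + ∑ i ∈ range n, dd (n+1) (i+1) * (s^(i+1)*s) := key n _
      have e3 : ∑ i ∈ range (n+1), dd n i * s^(i+1)
          = dd n 0 * s + ∑ i ∈ range n, dd n (i+1) * (s^(i+1)*s) := key n _
      have e4 : ∑ i ∈ range (n+1), dd (n+2) (i+1) * (s^(i+1)*s)
          = ∑ i ∈ range (n+1), (dd (n+1) i * (s^(i+1)*s) + 2*(dd (n+1) (i+1) * (s^(i+1)*s))
              - dd n (i+1) * (s^(i+1)*s)) :=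
        Finset.sum_congr rfl fun i hi => by
          rw [dd_rec n i (Nat.lt_succ_iff.mp (Finset.mem_range.mp hi))]; ring
      rw [e1, e4, Finset.sum_sub_distrib, Finset.sum_add_distrib]
      have p1 : ∑ i ∈ range (n+1), dd (n+1) i * (s^(i+1)*s)
          = (∑ i ∈ range (n+1), dd (n+1) i * s^(i+1)) * s := by
        rw [Finset.sum_mul]
        exact Finset.sum_congr rfl fun i _ => by ring
      have p2 : ∑ i ∈ range (n+1), 2*(dd (n+1) (i+1) * (s^(i+1)*s))
          = 2 * (∑ i ∈ range n, dd (n+1) (i+1) * (s^(i+1)*s)) := by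
        rw [← Finset.mul_sum, Finset.sum_range_succ, hdd1]; ring
      have p3 : ∑ i ∈ range (n+1), dd n (i+1) * (s^(i+1)*s)
          = ∑ i ∈ range n, dd n (i+1) * (s^(i+1)*s) := by
        rw [Finset.sum_range_succ, hdd0']; ring
      rw [p1, p2, p3, dd_zero_rec n, hT0ext]
      have hU : ∑ i ∈ range n, dd (n+1) (i+1) * (s^(i+1)*s)
          = (∑ i ∈ range (n+1), dd (n+1) i * s^(i+1)) - dd (n+1) 0 * s := by linarith [e2]
      have hV : ∑ i ∈ range n, dd n (i+1) * (s^(i+1)*s)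
          = (∑ i ∈ range (n+1), dd n i * s^(i+1)) - dd n 0 * s := by linarith [e3]
      rw [hU, hV]
      ring

theorem chebyshev_like_binomial_identity (k : ℕ) (hk : 1 ≤ k) (X : ℝ) (hX : 0 < X) :
    (1 / (k : ℝ)) * (X ^ (2 * k) + (X ^ (2 * k))⁻¹) - 2 / (k : ℝ) =
      ∑ j ∈ Finset.Icc 1 k,
        (1 / (j : ℝ)) * (Nat.choose (k + j - 1) (2 * j - 1) : ℝ) * (X - 1 / X) ^ (2 * j) := by
  have hX0 : X ≠ 0 := ne_of_gt hX
  have ht : (X^2 : ℝ) ≠ 0 := by positivity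
  have hk0 : (k:ℝ) ≠ 0 := Nat.cast_ne_zero.mpr (by omega)
  have hmain := cheb_main (X^2) ht k
  have hy : X^2 + (X^2)⁻¹ - 2 = (X - 1/X)^2 := by field_simp; ring
  have hpow : (X^2)^k = X^(2*k) := by rw [← pow_mul]
  rw [hy, hpow] at hmain
  calc (1/(k:ℝ)) * (X^(2*k) + (X^(2*k))⁻¹) - 2/(k:ℝ)
      = (1/(k:ℝ)) * (X^(2*k) + (X^(2*k))⁻¹ - 2) := by ring
    _ = (1/(k:ℝ)) * ∑ i ∈ range k, dd k i * ((X-1/X)^2)^(i+1) := by rw [hmain]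
    _ = ∑ i ∈ range k, (1/(k:ℝ)) * (dd k i * ((X-1/X)^2)^(i+1)) := Finset.mul_sum _ _ _
    _ = ∑ i ∈ range k, (1 / ((1+i:ℕ) : ℝ)) * (Nat.choose (k + (1+i) - 1) (2*(1+i) - 1) : ℝ)
          * (X - 1/X)^(2*(1+i)) := by
        refine Finset.sum_congr rfl fun i _ => ?_
        have h1 : k + (1+i) - 1 = k + i := by omega
        have h2 : 2*(1+i) - 1 = 2*i+1 := by omega
        rw [h1, h2, show 2*(1+i) = 2*(i+1) by ring, pow_mul]
        unfold dd
        have hi1 : ((i:ℝ)+1) ≠ 0 := by positivity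
        push_cast
        field_simp
        ring
    _ = ∑ j ∈ Finset.Icc 1 k, (1 / (j : ℝ)) * (Nat.choose (k + j - 1) (2 * j - 1) : ℝ)
          * (X - 1/X) ^ (2 * j) := by
        rw [← Finset.Ico_add_one_right_eq_Icc, Finset.sum_Ico_eq_sum_range]
        simp only [Nat.add_sub_cancel, Nat.succ_sub_one]
end

section
/- For every integer k ≥ 1 and every real X > 0, ∑_{j=1}^{k-1} 4/j + k·∑_{j=1}^{k} (1/j²)·C(k+j-1, 2j-1)·(X - 1/X)^(2j) = -2/k + (1/k)·(X^(2k) + X^(-2k)) + 2·∑_{j=1}^{k-1} (1/j)·(X^(2j) + X^(-2j)). -/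
open Finset
open Finset

lemma key_nat (m i : ℕ) :
    (m+2)*(i+1)*((m+i+3).choose (2*i+3)) + m*(i+1)*((m+i+1).choose (2*i+3)) =
    (m+1)*(i+2)*((m+i+1).choose (2*i+1)) + 2*(m+1)*(i+1)*((m+i+2).choose (2*i+3)) := by
  have p1 : (m+i+3).choose (2*i+3) = (m+i+2).choose (2*i+2) + (m+i+2).choose (2*i+3) :=
    Nat.choose_succ_succ _ _
  have p2 : (m+i+2).choose (2*i+2) = (m+i+1).choose (2*i+1) + (m+i+1).choose (2*i+2) :=
    Nat.choose_succ_succ _ _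
  have p3 : (m+i+2).choose (2*i+3) = (m+i+1).choose (2*i+2) + (m+i+1).choose (2*i+3) :=
    Nat.choose_succ_succ _ _
  have h := Nat.choose_succ_right_eq (m+i+1) (2*i+1)
  rcases le_or_gt i m with him | hmi
  · have hsub : m + i + 1 - (2*i+1) = m - i := by omega
    rw [hsub] at h
    zify [him] at h ⊢
    rw [p1, p2, p3]
    push_cast
    linear_combination h
  · have z1 : (m+i+1).choose (2*i+1) = 0 := Nat.choose_eq_zero_of_lt (by omega)
    have z2 : (m+i+1).choose (2*i+2) = 0 := Nat.choose_eq_zero_of_lt (by omega)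
    have z3 : (m+i+1).choose (2*i+3) = 0 := Nat.choose_eq_zero_of_lt (by omega)
    rw [p1, p2, p3, z1, z2, z3]
    ring

noncomputable def cc (k j : ℕ) : ℝ := (k : ℝ) / j * ((k + j - 1).choose (2*j - 1) : ℝ)

lemma cc_zero (k : ℕ) : cc k 0 = 0 := by simp [cc]

lemma cc_eq_zero_of_lt {k j : ℕ} (h : k < j) : cc k j = 0 := by
  have : (k + j - 1).choose (2*j - 1) = 0 := Nat.choose_eq_zero_of_lt (by omega)
  simp [cc, this]

lemma coeff_id (m j : ℕ) :
    cc (m+2) j + cc m j = (if j = 0 then 0 else cc (m+1) (j-1)) + 2 * cc (m+1) j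
      + (if j = 1 then 2 else 0) := by
  match j with
  | 0 => simp [cc_zero]
  | 1 =>
    simp only [cc, if_neg one_ne_zero, if_pos rfl]
    norm_num [Nat.choose_one_right]
    push_cast
    ring
  | (i+2) =>
    have key := key_nat m i
    simp only [cc, if_neg (by omega : ¬ i + 2 = 0), if_neg (by omega : ¬ i + 2 = 1)]
    have e1 : m + 2 + (i+2) - 1 = m + i + 3 := by omega
    have e2 : 2*(i+2) - 1 = 2*i+3 := by omega
    have e3 : m + (i+2) - 1 = m + i + 1 := by omega
    have e4 : (i+2) - 1 = i + 1 := by omega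
    have e5 : m + 1 + (i+1) - 1 = m + i + 1 := by omega
    have e6 : 2*(i+1) - 1 = 2*i+1 := by omega
    have e7 : m + 1 + (i+2) - 1 = m + i + 2 := by omega
    rw [e1, e2, e3, e4, e5, e6, e7]
    have hi1 : ((i:ℝ)+1) ≠ 0 := by positivity
    have hi2 : ((i:ℝ)+2) ≠ 0 := by positivity
    have keyr : ((m:ℝ)+2)*((i:ℝ)+1)*((m+i+3).choose (2*i+3) : ℝ)
        + (m:ℝ)*((i:ℝ)+1)*((m+i+1).choose (2*i+3) : ℝ)
        = ((m:ℝ)+1)*((i:ℝ)+2)*((m+i+1).choose (2*i+1) : ℝ)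
        + 2*((m:ℝ)+1)*((i:ℝ)+1)*((m+i+2).choose (2*i+3) : ℝ) := by
      exact_mod_cast congrArg (Nat.cast : ℕ → ℝ) key
    push_cast
    field_simp
    linear_combination keyr

noncomputable def AA (k : ℕ) (Y : ℝ) : ℝ := ∑ j ∈ Icc 1 k, cc k j * Y^(2*j)

lemma AA_eq_range (k N : ℕ) (h : k < N) (Y : ℝ) :
    AA k Y = ∑ j ∈ range N, cc k j * Y^(2*j) := by
  apply Finset.sum_subset
  · intro x hx
    simp only [mem_Icc, mem_range] at *
    omega
  · intro x hx hnx
    simp only [mem_Icc, mem_range, not_and, not_le] at hx hnx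
    rcases Nat.eq_zero_or_pos x with rfl | hx0
    · simp [cc_zero]
    · have : k < x := hnx hx0
      simp [cc_eq_zero_of_lt this]

lemma AA_rec (m : ℕ) (Y : ℝ) :
    AA (m+2) Y = (Y^2+2) * AA (m+1) Y + 2*Y^2 - AA m Y := by
  have h2 : AA (m+2) Y = ∑ j ∈ range (m+4), cc (m+2) j * Y^(2*j) :=
    AA_eq_range _ _ (by omega) _
  have h1 : AA (m+1) Y = ∑ j ∈ range (m+4), cc (m+1) j * Y^(2*j) :=
    AA_eq_range _ _ (by omega) _
  have h0 : AA m Y = ∑ j ∈ range (m+4), cc m j * Y^(2*j) :=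
    AA_eq_range _ _ (by omega) _
  have hshift : Y^2 * AA (m+1) Y
      = ∑ j ∈ range (m+4), (if j = 0 then 0 else cc (m+1) (j-1) * Y^(2*j)) := by
    rw [Finset.sum_range_succ' (fun j => if j = 0 then 0 else cc (m+1) (j-1) * Y^(2*j)) (m+3)]
    simp only [Nat.succ_ne_zero, Nat.add_sub_cancel, if_pos rfl, Nat.add_eq_zero,
      and_false, false_and, ite_false, if_true, add_zero]
    rw [AA_eq_range (m+1) (m+3) (by omega), Finset.mul_sum]
    apply Finset.sum_congr rfl
    intro j hj
    ring
  have h2Y : (∑ j ∈ range (m+4), (if j = 1 then (2:ℝ) else 0) * Y^(2*j)) = 2*Y^2 := by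
    rw [Finset.sum_eq_single 1]
    · norm_num
    · intro b _ hb; simp [hb]
    · intro h; exact absurd (Finset.mem_range.mpr (by omega)) h
  have main : (∑ j ∈ range (m+4), cc (m+2) j * Y^(2*j)) + (∑ j ∈ range (m+4), cc m j * Y^(2*j))
      = (∑ j ∈ range (m+4), (if j = 0 then 0 else cc (m+1) (j-1) * Y^(2*j)))
        + 2 * (∑ j ∈ range (m+4), cc (m+1) j * Y^(2*j))
        + (∑ j ∈ range (m+4), (if j = 1 then (2:ℝ) else 0) * Y^(2*j)) := by
    rw [Finset.mul_sum, ← Finset.sum_add_distrib, ← Finset.sum_add_distrib,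
      ← Finset.sum_add_distrib]
    apply Finset.sum_congr rfl
    intro j _
    have hc := coeff_id m j
    rcases eq_or_ne j 0 with rfl | hj0
    · simp [cc_zero]
    · rw [if_neg hj0] at hc ⊢
      rcases eq_or_ne j 1 with rfl | hj1
      · rw [if_pos rfl] at hc ⊢
        linear_combination Y^(2*1) * hc
      · rw [if_neg hj1] at hc ⊢
        linear_combination Y^(2*j) * hc
  rw [← h2, ← h0, ← hshift, ← h1, h2Y] at main
  linarith

lemma TA (X : ℝ) (hX : 0 < X) :
    ∀ k : ℕ, X^(2*k) + (X^(2*k))⁻¹ = AA k (X - 1/X) + 2 := by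
  have hX0 : X ≠ 0 := ne_of_gt hX
  have hY : (X - 1/X)^2 = X^2 + (X^2)⁻¹ - 2 := by field_simp; ring
  have huv : X^2 * (X^2)⁻¹ = 1 := mul_inv_cancel₀ (pow_ne_zero 2 hX0)
  intro k
  induction k using Nat.twoStepInduction with
  | zero => norm_num [AA]
  | one =>
    have hA1 : AA 1 (X - 1/X) = (X - 1/X)^2 := by
      simp [AA, cc]
    rw [hA1, hY]
    norm_num
  | more n ih1 ih2 =>
    rw [AA_rec, hY]
    rw [pow_mul, ← inv_pow] at ih1 ih2 ⊢
    linear_combination (X^2 + (X^2)⁻¹) * ih2 - ih1 - ((X^2)^n + ((X^2)⁻¹)^n) * huv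

lemma hs (j : ℕ) (hj : 1 ≤ j) : ∀ n : ℕ,
    (∑ i ∈ Icc 1 n, ((i + j - 1).choose (2*j - 1))) = (n + j).choose (2*j) := by
  intro n
  induction n with
  | zero => simp [Nat.choose_eq_zero_of_lt (by omega : j < 2*j)]
  | succ n ih =>
    rw [Finset.sum_Icc_succ_top (by omega), ih]
    have e1 : n + 1 + j - 1 = n + j := by omega
    have e2 : n + 1 + j = (n + j) + 1 := by omega
    have e3 : 2*j = (2*j - 1) + 1 := by omega
    rw [e1, e2, e3, Nat.choose_succ_succ]
    exact Nat.add_comm _ _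

lemma perj_nat (k j : ℕ) (hj : 1 ≤ j) (hjk : j ≤ k) :
    j * ((k + j - 1).choose (2*j - 1)) + 2*j*((k + j - 1).choose (2*j))
      = k * ((k + j - 1).choose (2*j - 1)) := by
  have h := Nat.choose_succ_right_eq (k + j - 1) (2*j - 1)
  have e : 2*j - 1 + 1 = 2*j := by omega
  have e2 : k + j - 1 - (2*j - 1) = k - j := by omega
  rw [e, e2] at h
  zify [hjk] at h ⊢
  linear_combination h

lemma AA_eq_Icc (i N : ℕ) (h : i ≤ N) (Y : ℝ) :
    AA i Y = ∑ j ∈ Icc 1 N, cc i j * Y^(2*j) := by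
  apply Finset.sum_subset
  · intro x hx
    simp only [mem_Icc] at *
    omega
  · intro x hx hnx
    simp only [mem_Icc] at hx hnx
    have : i < x := by omega
    simp [cc_eq_zero_of_lt this]

theorem combinatorial_identity_for_volumes (k : ℕ) (hk : 1 ≤ k) (X : ℝ) (hX : 0 < X) :
    (∑ j ∈ Finset.Icc 1 (k - 1), 4 / (j : ℝ)) +
      (k : ℝ) * ∑ j ∈ Finset.Icc 1 k,
        (1 / (j : ℝ) ^ 2) * (Nat.choose (k + j - 1) (2 * j - 1) : ℝ) * (X - 1 / X) ^ (2 * j) =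
    -(2 / (k : ℝ)) + (1 / (k : ℝ)) * (X ^ (2 * k) + (X ^ (2 * k))⁻¹) +
      2 * ∑ j ∈ Finset.Icc 1 (k - 1), (1 / (j : ℝ)) * (X ^ (2 * j) + (X ^ (2 * j))⁻¹) := by
  set Y := X - 1 / X with hYdef
  have hkR : ((k:ℝ)) ≠ 0 := Nat.cast_ne_zero.mpr (by omega)
  have hT := TA X hX
  simp only [← hYdef] at hT
  simp only [hT]
  have step1 : ∀ j ∈ Icc 1 k,
      (k:ℝ) * ((1/(j:ℝ)^2) * ((k + j - 1).choose (2*j - 1) : ℝ) * Y^(2*j))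
      = (1/(j:ℝ)) * ((k + j - 1).choose (2*j - 1) : ℝ) * Y^(2*j)
        + 2 * ((1/(j:ℝ)) * (((k-1) + j).choose (2*j) : ℝ) * Y^(2*j)) := by
    intro j hj
    rw [mem_Icc] at hj
    have hjR : ((j:ℝ)) ≠ 0 := Nat.cast_ne_zero.mpr (by omega)
    have e : (k-1) + j = k + j - 1 := by omega
    rw [e]
    have hn := perj_nat k j hj.1 hj.2
    have hr : (j:ℝ) * ((k + j - 1).choose (2*j - 1) : ℝ)
        + 2*(j:ℝ)*((k + j - 1).choose (2*j) : ℝ)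
        = (k:ℝ) * ((k + j - 1).choose (2*j - 1) : ℝ) := by exact_mod_cast hn
    field_simp
    linear_combination (-1 : ℝ) * Y^(2*j) * hr
  have step3 : (1/(k:ℝ)) * AA k Y
      = ∑ j ∈ Icc 1 k, (1/(j:ℝ)) * ((k + j - 1).choose (2*j - 1) : ℝ) * Y^(2*j) := by
    rw [AA, Finset.mul_sum]
    apply sum_congr rfl
    intro j hj
    rw [mem_Icc] at hj
    have hjR : ((j:ℝ)) ≠ 0 := Nat.cast_ne_zero.mpr (by omega)
    rw [cc]
    field_simp
  have step2 : ∑ i ∈ Icc 1 (k-1), (1/(i:ℝ)) * AA i Y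
      = ∑ j ∈ Icc 1 k, (1/(j:ℝ)) * (((k-1) + j).choose (2*j) : ℝ) * Y^(2*j) := by
    have inner : ∀ i ∈ Icc 1 (k-1), (1/(i:ℝ)) * AA i Y
        = ∑ j ∈ Icc 1 k, (1/(j:ℝ)) * ((i + j - 1).choose (2*j - 1) : ℝ) * Y^(2*j) := by
      intro i hi
      rw [mem_Icc] at hi
      rw [AA_eq_Icc i k (by omega) Y, Finset.mul_sum]
      apply sum_congr rfl
      intro j hj
      rw [mem_Icc] at hj
      have hiR : ((i:ℝ)) ≠ 0 := Nat.cast_ne_zero.mpr (by omega)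
      have hjR : ((j:ℝ)) ≠ 0 := Nat.cast_ne_zero.mpr (by omega)
      rw [cc]
      field_simp
    rw [sum_congr rfl inner, Finset.sum_comm]
    apply sum_congr rfl
    intro j hj
    rw [mem_Icc] at hj
    have hcast : ∑ i ∈ Icc 1 (k-1), ((i + j - 1).choose (2*j - 1) : ℝ)
        = ((((k-1) + j).choose (2*j) : ℕ) : ℝ) := by
      exact_mod_cast congrArg (Nat.cast (R := ℝ)) (hs j hj.1 (k-1))
    calc ∑ i ∈ Icc 1 (k-1), (1/(j:ℝ)) * ((i + j - 1).choose (2*j - 1):ℝ) * Y^(2*j)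
        = (1/(j:ℝ)) * (∑ i ∈ Icc 1 (k-1), ((i + j - 1).choose (2*j - 1):ℝ)) * Y^(2*j) := by
          rw [Finset.mul_sum, Finset.sum_mul]
      _ = _ := by rw [hcast]
  have key : (k : ℝ) * (∑ j ∈ Icc 1 k,
        (1 / (j : ℝ) ^ 2) * ((k + j - 1).choose (2 * j - 1) : ℝ) * Y ^ (2 * j))
      = (1/(k:ℝ)) * AA k Y + 2 * ∑ i ∈ Icc 1 (k-1), (1/(i:ℝ)) * AA i Y := by
    rw [Finset.mul_sum, Finset.sum_congr rfl step1, Finset.sum_add_distrib, ← step3,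
      ← Finset.mul_sum, ← step2]
  have expand : ∑ j ∈ Icc 1 (k-1), (1/(j:ℝ)) * (AA j Y + 2)
      = (∑ j ∈ Icc 1 (k-1), (1/(j:ℝ)) * AA j Y)
        + (1/2) * ∑ j ∈ Icc 1 (k-1), 4/(j:ℝ) := by
    rw [Finset.mul_sum, ← Finset.sum_add_distrib]
    apply sum_congr rfl
    intro j hj
    ring
  rw [expand]
  linear_combination key
end

section
/- For every integer k ≥ 1 and every real X > 1, the two series ∑_{i≥1, i≠k} (-1)^i/((i-k)(i+k)) and ∑_{j≥1, j≠k} (X^{-2(j+k)}/(k(j+k)) + X^{-2(j-k)}/(k(j-k))) converge, and 2·∑_{i≥1, i≠k} (-1)^i/((i-k)(i+k)) + (-1)^k·∑_{j≥1, j≠k} (X^{-2(j+k)}/(k(j+k)) + X^{-2(j-k)}/(k(j-k))) = 1/k² - ((-1)^k/k)·( (X^{-4k}-1)/(2k) + 2·log(1 - X^{-2}) + 1/(k·X^{2k}) + ∑_{j=1}^{k-1} (1/j)·(X^{2j} + X^{-2j}) ). -/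
open Finset Filter Topology

section
variable (k : ℕ)

noncomputable def fA (k : ℕ) : ℕ → ℝ := fun i =>
  if i = 0 ∨ i = k then 0 else (-1 : ℝ) ^ i / (((i : ℝ) - (k : ℝ)) * ((i : ℝ) + (k : ℝ)))

noncomputable def rho (k : ℕ) : ℕ → ℝ := fun N =>
  (1/(2*(k:ℝ))) * ∑ j ∈ Finset.Ico N (N + 2*k), (-1 : ℝ)^j / ((j:ℝ) - (k:ℝ))

lemma summable_fA (hk : 1 ≤ k) : Summable (fA k) := by
  rw [← summable_nat_add_iff (k+1)]
  apply Summable.of_abs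
  have hsq : Summable (fun n : ℕ => 1/((n:ℝ)+1)^2) := by
    have h := (Real.summable_one_div_nat_pow (p := 2)).2 one_lt_two
    have h2 := (summable_nat_add_iff 1).2 h
    simpa using h2
  apply Summable.of_nonneg_of_le (fun n => abs_nonneg _) _ hsq
  intro n
  have h1 : ¬(n + (k+1) = 0 ∨ n + (k+1) = k) := by omega
  simp only [fA, h1, if_false]
  rw [abs_div, abs_pow, abs_neg, abs_one, one_pow]
  have hc1 : ((n + (k+1) : ℕ) : ℝ) - (k:ℝ) = (n:ℝ) + 1 := by push_cast; ring
  have hc2 : ((n + (k+1) : ℕ) : ℝ) + (k:ℝ) = (n:ℝ) + 1 + 2*k := by push_cast; ring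
  rw [hc1, hc2]
  have hp1 : (0:ℝ) < (n:ℝ) + 1 := by positivity
  have hp2 : (0:ℝ) < (n:ℝ) + 1 + 2*k := by positivity
  rw [abs_of_pos (by positivity)]
  rw [div_le_div_iff₀ (by positivity) (by positivity)]
  nlinarith [Nat.cast_nonneg (α := ℝ) n, Nat.cast_nonneg (α := ℝ) k]

lemma fA_step (hk : 1 ≤ k) (i : ℕ) (hi : k + 1 ≤ i) : fA k i = rho k i - rho k (i+1) := by
  have hne : ¬(i = 0 ∨ i = k) := by omega
  have hik : (0:ℝ) < (i:ℝ) - (k:ℝ) := by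
    have : (k:ℝ) < (i:ℝ) := by exact_mod_cast hi
    linarith
  have hik2 : (0:ℝ) < (i:ℝ) + (k:ℝ) := by positivity
  have hk0 : (0:ℝ) < (k:ℝ) := by exact_mod_cast hk
  simp only [fA, rho, hne, if_false]
  have e1 : ∑ j ∈ Finset.Ico i (i + 2*k), (-1 : ℝ)^j / ((j:ℝ) - (k:ℝ))
      = (-1:ℝ)^i / ((i:ℝ) - k) + ∑ j ∈ Finset.Ico (i+1) (i + 2*k), (-1 : ℝ)^j / ((j:ℝ) - (k:ℝ)) :=
    Finset.sum_eq_sum_Ico_succ_bot (by omega) _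
  have e2 : ∑ j ∈ Finset.Ico (i+1) (i + 1 + 2*k), (-1 : ℝ)^j / ((j:ℝ) - (k:ℝ))
      = ∑ j ∈ Finset.Ico (i+1) (i + 2*k), (-1 : ℝ)^j / ((j:ℝ) - (k:ℝ))
        + (-1:ℝ)^(i + 2*k) / (((i + 2*k : ℕ):ℝ) - k) := by
    have : i + 1 + 2*k = (i + 2*k) + 1 := by omega
    rw [this, Finset.sum_Ico_succ_top (by omega)]
  rw [e1, e2]
  have hc : ((i + 2*k : ℕ):ℝ) - (k:ℝ) = (i:ℝ) + k := by push_cast; ring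
  have hs : (-1:ℝ)^(i + 2*k) = (-1:ℝ)^i := by
    rw [pow_add]
    simp [pow_mul]
  rw [hc, hs]
  field_simp
  ring

lemma partial_sum_fA (hk : 1 ≤ k) (N : ℕ) (hN : k + 1 ≤ N) :
    ∑ i ∈ Finset.range N, fA k i
      = ∑ i ∈ Finset.range (k+1), fA k i + rho k (k+1) - rho k N := by
  induction N, hN using Nat.le_induction with
  | base => ring
  | succ N hN ih =>
    rw [Finset.sum_range_succ, ih, fA_step k hk N hN]
    ring

lemma rho_tendsto (hk : 1 ≤ k) : Tendsto (rho k) atTop (𝓝 0) := by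
  have hb : ∀ N : ℕ, k + 1 ≤ N → ‖rho k N‖ ≤ 1 / ((N:ℝ) - k) := by
    intro N hN
    have hNk : (0:ℝ) < (N:ℝ) - k := by
      have : (k:ℝ) < (N:ℝ) := by exact_mod_cast hN
      linarith
    have hk0 : (0:ℝ) < (k:ℝ) := by exact_mod_cast hk
    rw [rho, Real.norm_eq_abs, abs_mul]
    have h1 : |1/(2*(k:ℝ))| = 1/(2*k) := abs_of_pos (by positivity)
    rw [h1]
    have h2 : |∑ j ∈ Finset.Ico N (N + 2*k), (-1 : ℝ)^j / ((j:ℝ) - (k:ℝ))|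
        ≤ ∑ j ∈ Finset.Ico N (N + 2*k), (1 : ℝ) / ((N:ℝ) - (k:ℝ)) := by
      refine (Finset.abs_sum_le_sum_abs _ _).trans (Finset.sum_le_sum ?_)
      intro j hj
      rw [Finset.mem_Ico] at hj
      have hj1 : (N:ℝ) ≤ (j:ℝ) := by exact_mod_cast hj.1
      have hjk : (0:ℝ) < (j:ℝ) - k := by linarith
      rw [abs_div, abs_pow, abs_neg, abs_one, one_pow, abs_of_pos hjk]
      apply one_div_le_one_div_of_le hNk
      linarith
    rw [Finset.sum_const, Nat.card_Ico] at h2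
    have h3 : N + 2*k - N = 2*k := by omega
    rw [h3] at h2
    calc 1/(2*(k:ℝ)) * |∑ j ∈ Finset.Ico N (N + 2*k), (-1 : ℝ)^j / ((j:ℝ) - (k:ℝ))|
        ≤ 1/(2*(k:ℝ)) * ((2*k) • ((1:ℝ) / ((N:ℝ) - k))) := by
          apply mul_le_mul_of_nonneg_left h2 (by positivity)
      _ = 1 / ((N:ℝ) - k) := by
          rw [nsmul_eq_mul]
          push_cast
          field_simp
  have htend : Tendsto (fun N : ℕ => 1 / ((N:ℝ) - k)) atTop (𝓝 0) := by
    simp only [one_div]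
    apply Tendsto.comp tendsto_inv_atTop_zero
    apply tendsto_atTop_add_const_right
    exact tendsto_natCast_atTop_atTop
  exact squeeze_zero_norm' (by filter_upwards [eventually_ge_atTop (k+1)] using hb) htend

end

lemma neg1pow (a b c : ℕ) (h : a + b = c) : (-1:ℝ)^c * (-1:ℝ)^b = (-1:ℝ)^a := by
  rw [← h, pow_add, mul_assoc, ← pow_add, ← two_mul, pow_mul]
  norm_num

lemma algA (K a b s : ℝ) (hK : K ≠ 0) (hs : s * s = 1) :
    1/(2*K) * (-(s*a) - s*(b - (a + s/K))) + s/(2*K) * (b + 1/(2*K))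
      = 1/(2*K^2) + s/(4*K^2) := by
  have h : 1/(2*K) * (-(s*a) - s*(b - (a + s/K))) + s/(2*K) * (b + 1/(2*K))
      = (s*s)/(2*K^2) + s/(4*K^2) := by
    field_simp
    ring
  rw [h, hs]

lemma hasSum_fA (k : ℕ) (hk : 1 ≤ k) :
    HasSum (fA k) (∑ i ∈ Finset.range (k+1), fA k i + rho k (k+1)) := by
  have hs := summable_fA k hk
  have h1 := hs.hasSum.tendsto_sum_nat
  have h2 : Tendsto (fun N => ∑ i ∈ Finset.range (k+1), fA k i + rho k (k+1) - rho k N)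
      atTop (𝓝 (∑ i ∈ Finset.range (k+1), fA k i + rho k (k+1))) := by
    have hc : Tendsto (fun _ : ℕ => ∑ i ∈ Finset.range (k+1), fA k i + rho k (k+1))
        atTop (𝓝 (∑ i ∈ Finset.range (k+1), fA k i + rho k (k+1))) := tendsto_const_nhds
    simpa using hc.sub (rho_tendsto k hk)
  have h3 : Tendsto (fun N => ∑ i ∈ Finset.range N, fA k i) atTop
      (𝓝 (∑ i ∈ Finset.range (k+1), fA k i + rho k (k+1))) := by
    refine Tendsto.congr' ?_ h2
    filter_upwards [eventually_ge_atTop (k+1)] with N hN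
    exact (partial_sum_fA k hk N hN).symm
  have := tendsto_nhds_unique h1 h3
  rw [← this]
  exact hs.hasSum

lemma Aval_eval (k : ℕ) (hk : 1 ≤ k) :
    ∑ i ∈ Finset.range (k+1), fA k i + rho k (k+1)
      = 1/(2*(k:ℝ)^2) + (-1:ℝ)^k/(4*(k:ℝ)^2) := by
  obtain ⟨m, rfl⟩ : ∃ m, k = m + 1 := ⟨k - 1, by omega⟩
  have hK0 : ((m:ℝ) + 1) ≠ 0 := by positivity
  set ah : ℕ → ℝ := fun n => ∑ i ∈ Finset.range n, (-1:ℝ)^(1+i)/(1+(i:ℝ)) with hah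
  -- step 0 : restrict to Ico 1 (m+1)
  have e0 : ∑ i ∈ Finset.range (m+2), fA (m+1) i
      = ∑ i ∈ Finset.Ico 1 (m+1), (-1:ℝ)^i / (((i:ℝ) - ((m:ℝ)+1)) * ((i:ℝ) + ((m:ℝ)+1))) := by
    rw [Finset.range_eq_Ico]
    rw [← Finset.sum_subset (Finset.Ico_subset_Ico (by omega) (by omega) :
      Finset.Ico 1 (m+1) ⊆ Finset.Ico 0 (m+2))]
    · apply Finset.sum_congr rfl
      intro i hi
      rw [Finset.mem_Ico] at hi
      have : ¬(i = 0 ∨ i = m+1) := by omega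
      simp only [fA, this, if_false]
      push_cast
      ring_nf
    · intro x hx hx2
      rw [Finset.mem_Ico] at hx
      rw [Finset.mem_Ico] at hx2
      have : x = 0 ∨ x = m+1 := by omega
      simp only [fA, this, if_true]
  -- step 1 : partial fractions
  have e1 : ∑ i ∈ Finset.Ico 1 (m+1), (-1:ℝ)^i / (((i:ℝ) - ((m:ℝ)+1)) * ((i:ℝ) + ((m:ℝ)+1)))
      = (1/(2*((m:ℝ)+1))) * ((∑ i ∈ Finset.Ico 1 (m+1), (-1:ℝ)^i / ((i:ℝ) - ((m:ℝ)+1)))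
        - ∑ i ∈ Finset.Ico 1 (m+1), (-1:ℝ)^i / ((i:ℝ) + ((m:ℝ)+1))) := by
    rw [← Finset.sum_sub_distrib, Finset.mul_sum]
    apply Finset.sum_congr rfl
    intro i hi
    rw [Finset.mem_Ico] at hi
    have h1 : (i:ℝ) - ((m:ℝ)+1) ≠ 0 := by
      have : (i:ℝ) < (m:ℝ)+1 := by exact_mod_cast hi.2
      intro h; linarith
    have h2 : (i:ℝ) + ((m:ℝ)+1) ≠ 0 := by positivity
    field_simp
    ring
  -- step 2 : T1
  have e2 : ∑ i ∈ Finset.Ico 1 (m+1), (-1:ℝ)^i / ((i:ℝ) - ((m:ℝ)+1))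
      = -((-1:ℝ)^(m+1) * ah m) := by
    rw [Finset.sum_Ico_eq_sum_range]
    simp only [Nat.add_sub_cancel]
    rw [← Finset.sum_range_reflect]
    rw [hah, Finset.mul_sum, ← Finset.sum_neg_distrib]
    apply Finset.sum_congr rfl
    intro i hi
    rw [Finset.mem_range] at hi
    have h1 : 1 + (m - 1 - i) = m - i := by omega
    rw [h1]
    have h2 : ((m - i : ℕ):ℝ) = (m:ℝ) - (i:ℝ) := by
      rw [Nat.cast_sub (by omega)]
    rw [h2]
    have h3 : (-1:ℝ)^(m+1) * (-1:ℝ)^(1+i) = (-1:ℝ)^(m-i) := neg1pow _ _ _ (by omega)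
    rw [← h3]
    have h4 : (m:ℝ) - (i:ℝ) - ((m:ℝ)+1) = -(1+(i:ℝ)) := by ring
    rw [h4, div_neg]
    ring
  -- step 3 : T2
  have e3 : ∑ i ∈ Finset.Ico 1 (m+1), (-1:ℝ)^i / ((i:ℝ) + ((m:ℝ)+1))
      = (-1:ℝ)^(m+1) * (ah (2*m+1) - ah (m+1)) := by
    have h0 : ah (2*m+1) - ah (m+1)
        = ∑ i ∈ Finset.Ico (m+1) (2*m+1), (-1:ℝ)^(1+i)/(1+(i:ℝ)) := by
      rw [hah, Finset.sum_Ico_eq_sub _ (by omega)]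
    rw [h0, Finset.sum_Ico_eq_sum_range, Finset.sum_Ico_eq_sum_range]
    simp only [Nat.add_sub_cancel]
    have h1 : 2*m+1 - (m+1) = m := by omega
    rw [h1, Finset.mul_sum]
    apply Finset.sum_congr rfl
    intro i hi
    have hss : (-1:ℝ)^(m+1) * (-1:ℝ)^(m+1) = 1 := by
      rw [← pow_add, ← two_mul, pow_mul]; norm_num
    have h2 : (-1:ℝ)^(m+1) * (-1:ℝ)^(1+(m+1+i)) = (-1:ℝ)^(1+i) := by
      have h2' : 1+(m+1+i) = (1+i)+(m+1) := by omega
      rw [h2', pow_add]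
      linear_combination ((-1:ℝ)^(1+i)) * hss
    rw [← h2]
    push_cast
    have h5 : (1:ℝ)+(i:ℝ)+((m:ℝ)+1) ≠ 0 := by positivity
    field_simp
    ring
  -- step 4 : rho eval
  have e4 : rho (m+1) (m+2) = ((-1:ℝ)^(m+1)/(2*((m:ℝ)+1))) * ah (2*m+2) := by
    rw [rho, Finset.sum_Ico_eq_sum_range]
    simp only [Nat.add_sub_cancel_left]
    have h1 : 2*(m+1) = 2*m+2 := by omega
    rw [h1]
    simp only [hah]
    rw [Finset.mul_sum, Finset.mul_sum]
    apply Finset.sum_congr rfl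
    intro i hi
    have h2 : (-1:ℝ)^(m+2+i) = (-1:ℝ)^(m+1) * (-1:ℝ)^(1+i) := by
      have h2' : m+2+i = (m+1)+(1+i) := by omega
      rw [h2', pow_add]
    rw [h2]
    push_cast
    have h5 : (1:ℝ)+(i:ℝ) ≠ 0 := by positivity
    have h6 : (m:ℝ) + 2 + (i:ℝ) - ((m:ℝ)+1) = 1 + (i:ℝ) := by ring
    rw [h6]
    ring
  -- recursions
  have e5 : ah (m+1) = ah m + (-1:ℝ)^(m+1)/((m:ℝ)+1) := by
    simp only [hah]
    rw [Finset.sum_range_succ]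
    have : 1 + m = m + 1 := by omega
    rw [this]
    rw [add_comm (1:ℝ) (m:ℝ)]
  have e6 : ah (2*m+2) = ah (2*m+1) + 1/(2*((m:ℝ)+1)) := by
    simp only [hah]
    have h0 : 2*m+2 = (2*m+1)+1 := by omega
    rw [h0, Finset.sum_range_succ]
    have h1 : (-1:ℝ)^(1+(2*m+1)) = 1 := by
      have : 1+(2*m+1) = 2*(m+1) := by omega
      rw [this, pow_mul]
      norm_num
    rw [h1]
    push_cast
    rw [show (1:ℝ)+(2*(m:ℝ)+1) = 2*((m:ℝ)+1) by ring]
  rw [e0, e1, e2, e3, e4, e5, e6]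
  have hss : (-1:ℝ)^(m+1) * (-1:ℝ)^(m+1) = 1 := by
    rw [← pow_add, ← two_mul, pow_mul]
    norm_num
  have hKc : ((m+1 : ℕ):ℝ) = (m:ℝ)+1 := by push_cast; ring
  rw [hKc]
  exact algA ((m:ℝ)+1) (ah m) (ah (2*m+1)) ((-1:ℝ)^(m+1)) hK0 hss

lemma hasSum_ifzero' {f : ℕ → ℝ} {a : ℝ} {k : ℕ} (hk : k ≠ 0) (h : HasSum f a) :
    HasSum (fun n => if n = 0 ∨ n = k then 0 else f n) (a - f 0 - f k) := by
  have h2 := (h.update 0 0).update k 0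
  have he : (fun n => if n = 0 ∨ n = k then 0 else f n)
      = Function.update (Function.update f 0 0) k 0 := by
    funext n
    rcases eq_or_ne n k with rfl | hnk
    · simp
    · rcases eq_or_ne n 0 with rfl | hn0
      · simp [Function.update_of_ne (Ne.symm hk)]
      · simp [Function.update_of_ne hnk, Function.update_of_ne hn0, hn0, hnk]
  rw [he]
  rw [Function.update_of_ne hk 0 f] at h2
  convert h2 using 1
  · rfl
  ring

section
variable (k : ℕ) (X : ℝ)

noncomputable def fL (X : ℝ) : ℕ → ℝ := fun n => if n = 0 then 0 else ((X^2)⁻¹)^n/(n:ℝ)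

noncomputable def g1 (k : ℕ) (X : ℝ) : ℕ → ℝ := fun j =>
  if j = 0 ∨ j = k then 0 else
    X ^ (-(2:ℤ) * ((j:ℤ) + (k:ℤ))) / ((k:ℝ) * ((j:ℝ) + (k:ℝ)))

noncomputable def g2 (k : ℕ) (X : ℝ) : ℕ → ℝ := fun j =>
  if j = 0 ∨ j = k then 0 else
    X ^ (-(2:ℤ) * ((j:ℤ) - (k:ℤ))) / ((k:ℝ) * ((j:ℝ) - (k:ℝ)))

lemma xpow_eq (X : ℝ) (hX : 0 < X) (a : ℤ) (n : ℕ) (h : a = -(2*(n:ℤ))) :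
    X ^ a = ((X^2)⁻¹)^n := by
  rw [h, inv_pow, ← pow_mul]
  rw [show -(2*(n:ℤ)) = -((2*n : ℕ) : ℤ) by push_cast; ring]
  rw [zpow_neg, zpow_natCast]

lemma hasSum_fL (hX : 1 < X) : HasSum (fL X) (-Real.log (1 - (X^2)⁻¹)) := by
  have hu0 : (0:ℝ) < (X^2)⁻¹ := by positivity
  have hu1 : (X^2)⁻¹ < 1 := by
    rw [inv_lt_one_iff₀]; right; nlinarith
  have h := Real.hasSum_pow_div_log_of_abs_lt_one (x := (X^2)⁻¹)
    (by rw [abs_of_pos hu0]; exact hu1)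
  have h2 : HasSum (fun n => fL X (n+1)) (-Real.log (1 - (X^2)⁻¹)) := by
    have he : (fun n : ℕ => fL X (n+1)) = (fun n : ℕ => ((X^2)⁻¹)^(n+1)/((n:ℝ)+1)) := by
      funext n
      simp only [fL, Nat.succ_ne_zero, if_false]
      push_cast
      ring
    rw [he]
    exact h
  have h3 := (hasSum_nat_add_iff (f := fL X) 1).1 h2
  simpa [fL] using h3

lemma hasSum_g1 (hk : 1 ≤ k) (hX : 1 < X) :
    HasSum (g1 k X)
      ((-Real.log (1 - (X^2)⁻¹) - (∑ i ∈ Finset.Ico 1 k, ((X^2)⁻¹)^i/(i:ℝ))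
        - ((X^2)⁻¹)^k/(k:ℝ) - ((X^2)⁻¹)^(2*k)/(2*(k:ℝ)))/(k:ℝ)) := by
  have hX0 : (0:ℝ) < X := by linarith
  have hk0 : ((k:ℝ)) ≠ 0 := Nat.cast_ne_zero.2 (by omega)
  set L := -Real.log (1 - (X^2)⁻¹) with hL
  have h0 := hasSum_fL X hX
  have hsh : HasSum (fun n => fL X (n+k)) (L - ∑ i ∈ Finset.range k, fL X i) := by
    apply (hasSum_nat_add_iff (f := fL X) k).2
    rw [sub_add_cancel]
    exact h0
  have hif := hasSum_ifzero' (show k ≠ 0 by omega) hsh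
  have hdiv := hif.div_const (k:ℝ)
  have hfeq : (fun n => (if n = 0 ∨ n = k then 0 else fL X (n+k)) / (k:ℝ)) = g1 k X := by
    funext j
    by_cases hj : j = 0 ∨ j = k
    · simp [g1, hj]
    · simp only [g1, hj, if_false]
      have hjk : j + k ≠ 0 := by omega
      simp only [fL, hjk, if_false]
      rw [xpow_eq X hX0 _ (j+k) (by push_cast; ring)]
      push_cast
      rw [div_div]
      ring_nf
  rw [hfeq] at hdiv
  convert hdiv using 1
  · rfl
  have hC : ∑ i ∈ Finset.range k, fL X i = ∑ i ∈ Finset.Ico 1 k, ((X^2)⁻¹)^i/(i:ℝ) := by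
    rw [Finset.range_eq_Ico, Finset.sum_eq_sum_Ico_succ_bot (by omega)]
    have : fL X 0 = 0 := by simp [fL]
    rw [this, zero_add]
    apply Finset.sum_congr rfl
    intro i hi
    rw [Finset.mem_Ico] at hi
    simp [fL, show i ≠ 0 by omega]
  have hk1 : fL X (0+k) = ((X^2)⁻¹)^k/(k:ℝ) := by
    simp [fL, show k ≠ 0 by omega]
  have hk2 : fL X (k+k) = ((X^2)⁻¹)^(2*k)/(2*(k:ℝ)) := by
    simp only [fL, show k + k ≠ 0 by omega, if_false]
    rw [show k + k = 2*k by ring]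
    push_cast
    ring
  rw [hC, hk1, hk2]

lemma sum_g2_finite (hk : 1 ≤ k) (hX : 1 < X) :
    ∑ i ∈ Finset.range (k+1), g2 k X i
      = -(1/(k:ℝ)) * ∑ i ∈ Finset.Ico 1 k, X^(2*i)/(i:ℝ) := by
  obtain ⟨m, rfl⟩ : ∃ m, k = m + 1 := ⟨k - 1, by omega⟩
  have hX0 : (0:ℝ) < X := by linarith
  have hk0 : (((m+1:ℕ):ℝ)) ≠ 0 := by push_cast; positivity
  have e0 : ∑ i ∈ Finset.range (m+2), g2 (m+1) X i
      = ∑ i ∈ Finset.Ico 1 (m+1), X ^ (-(2:ℤ) * ((i:ℤ) - ((m+1:ℕ):ℤ))) / (((m+1:ℕ):ℝ) * ((i:ℝ) - ((m+1:ℕ):ℝ))) := by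
    rw [Finset.range_eq_Ico]
    rw [← Finset.sum_subset (Finset.Ico_subset_Ico (by omega) (by omega) :
      Finset.Ico 1 (m+1) ⊆ Finset.Ico 0 (m+2))]
    · apply Finset.sum_congr rfl
      intro i hi
      rw [Finset.mem_Ico] at hi
      have : ¬(i = 0 ∨ i = m+1) := by omega
      simp only [g2, this, if_false]
    · intro x hx hx2
      rw [Finset.mem_Ico] at hx
      rw [Finset.mem_Ico] at hx2
      have : x = 0 ∨ x = m+1 := by omega
      simp only [g2, this, if_true]
  rw [e0, Finset.sum_Ico_eq_sum_range, Finset.sum_Ico_eq_sum_range]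
  simp only [Nat.add_sub_cancel]
  rw [← Finset.sum_range_reflect]
  rw [Finset.mul_sum]
  apply Finset.sum_congr rfl
  intro i hi
  rw [Finset.mem_range] at hi
  have h1 : 1 + (m - 1 - i) = m - i := by omega
  rw [h1]
  have h2 : ((m - i : ℕ):ℝ) = (m:ℝ) - (i:ℝ) := by
    rw [Nat.cast_sub (by omega)]
  have h3 : X ^ (-(2:ℤ) * (((m-i : ℕ):ℤ) - ((m+1:ℕ):ℤ))) = X ^ (2*(1+i)) := by
    have hc : ((m-i : ℕ):ℤ) = (m:ℤ) - (i:ℤ) := by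
      rw [Int.ofNat_sub (by omega)]
    rw [hc]
    rw [show (-(2:ℤ) * (((m:ℤ) - (i:ℤ)) - ((m+1:ℕ):ℤ))) = ((2*(1+i) : ℕ) : ℤ) by push_cast; ring]
    rw [zpow_natCast]
  rw [h3, h2]
  push_cast
  have h5 : (1:ℝ) + (i:ℝ) ≠ 0 := by positivity
  have h6 : (m:ℝ) - (i:ℝ) - ((m:ℝ)+1) = -(1+(i:ℝ)) := by ring
  have h7 : ((m:ℝ)+1) ≠ 0 := by positivity
  rw [h6]
  rw [show ((m:ℝ)+1) * -(1+(i:ℝ)) = -(((m:ℝ)+1) * (1+(i:ℝ))) from by ring]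
  rw [div_neg, neg_mul]
  congr 1
  rw [one_div, inv_mul_eq_div, div_div, mul_comm ((m:ℝ)+1) (1+(i:ℝ))]

lemma hasSum_g2 (hk : 1 ≤ k) (hX : 1 < X) :
    HasSum (g2 k X)
      ((-Real.log (1 - (X^2)⁻¹))/(k:ℝ) + -(1/(k:ℝ)) * ∑ i ∈ Finset.Ico 1 k, X^(2*i)/(i:ℝ)) := by
  have hX0 : (0:ℝ) < X := by linarith
  have hk0 : ((k:ℝ)) ≠ 0 := Nat.cast_ne_zero.2 (by omega)
  have hu0 : (0:ℝ) < (X^2)⁻¹ := by positivity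
  have hu1 : (X^2)⁻¹ < 1 := by rw [inv_lt_one_iff₀]; right; nlinarith
  have h := Real.hasSum_pow_div_log_of_abs_lt_one (x := (X^2)⁻¹)
    (by rw [abs_of_pos hu0]; exact hu1)
  have hM : HasSum (fun j => g2 k X (j + (k+1))) ((-Real.log (1 - (X^2)⁻¹))/(k:ℝ)) := by
    have hd := h.div_const (k:ℝ)
    have he : (fun j : ℕ => g2 k X (j + (k+1)))
        = (fun n : ℕ => ((X^2)⁻¹)^(n+1)/((n:ℝ)+1) / (k:ℝ)) := by
      funext j
      have hj : ¬(j + (k+1) = 0 ∨ j + (k+1) = k) := by omega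
      simp only [g2, hj, if_false]
      rw [xpow_eq X hX0 _ (j+1) (by push_cast; ring)]
      push_cast
      rw [div_div]
      ring_nf
    rw [he]
    exact hd
  have hg := (hasSum_nat_add_iff (f := g2 k X) (k+1)).1 hM
  rw [sum_g2_finite k X hk hX] at hg
  exact hg

end


theorem series_identity_excluding_k (k : ℕ) (hk : 1 ≤ k) (X : ℝ) (hX : 1 < X) :
    ∃ A B : ℝ,
      HasSum (fun i : ℕ => if i = 0 ∨ i = k then 0 else
        (-1 : ℝ) ^ i / (((i : ℝ) - (k : ℝ)) * ((i : ℝ) + (k : ℝ)))) A ∧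
      HasSum (fun j : ℕ => if j = 0 ∨ j = k then 0 else
        X ^ (-(2 : ℤ) * ((j : ℤ) + (k : ℤ))) / ((k : ℝ) * ((j : ℝ) + (k : ℝ))) +
        X ^ (-(2 : ℤ) * ((j : ℤ) - (k : ℤ))) / ((k : ℝ) * ((j : ℝ) - (k : ℝ)))) B ∧
      2 * A + (-1 : ℝ) ^ k * B =
        1 / (k : ℝ) ^ 2 - ((-1 : ℝ) ^ k / (k : ℝ)) *
          ((X ^ (-(4 : ℤ) * (k : ℤ)) - 1) / (2 * (k : ℝ)) +
            2 * Real.log (1 - (X ^ 2)⁻¹) +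
            1 / ((k : ℝ) * X ^ (2 * k)) +
            ∑ j ∈ Finset.Icc 1 (k - 1), (1 / (j : ℝ)) * (X ^ (2 * j) + (X ^ (2 * j))⁻¹)) := by
  have hX0 : (0:ℝ) < X := by linarith
  have hk0 : ((k:ℝ)) ≠ 0 := Nat.cast_ne_zero.2 (by omega)
  refine ⟨1/(2*(k:ℝ)^2) + (-1:ℝ)^k/(4*(k:ℝ)^2),
    ((-Real.log (1 - (X^2)⁻¹) - (∑ i ∈ Finset.Ico 1 k, ((X^2)⁻¹)^i/(i:ℝ))
        - ((X^2)⁻¹)^k/(k:ℝ) - ((X^2)⁻¹)^(2*k)/(2*(k:ℝ)))/(k:ℝ))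
      + ((-Real.log (1 - (X^2)⁻¹))/(k:ℝ) + -(1/(k:ℝ)) * ∑ i ∈ Finset.Ico 1 k, X^(2*i)/(i:ℝ)),
    ?_, ?_, ?_⟩
  · have h := hasSum_fA k hk
    rw [Aval_eval k hk] at h
    exact h
  · have h := (hasSum_g1 k X hk hX).add (hasSum_g2 k X hk hX)
    have hfe : (fun j => g1 k X j + g2 k X j)
        = (fun j : ℕ => if j = 0 ∨ j = k then 0 else
            X ^ (-(2 : ℤ) * ((j : ℤ) + (k : ℤ))) / ((k : ℝ) * ((j : ℝ) + (k : ℝ))) +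
            X ^ (-(2 : ℤ) * ((j : ℤ) - (k : ℤ))) / ((k : ℝ) * ((j : ℝ) - (k : ℝ)))) := by
      funext j
      by_cases hj : j = 0 ∨ j = k
      · simp [g1, g2, hj]
      · simp [g1, g2, hj]
    rw [hfe] at h
    exact h
  · have h4k : X ^ (-(4:ℤ)*(k:ℤ)) = ((X^2)⁻¹)^(2*k) :=
      xpow_eq X hX0 _ (2*k) (by push_cast; ring)
    have hxk : (1:ℝ)/((k:ℝ) * X^(2*k)) = ((X^2)⁻¹)^k/(k:ℝ) := by
      rw [inv_pow, ← pow_mul]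
      rw [one_div, mul_inv, div_eq_mul_inv, mul_comm]
    have hicc : ∑ j ∈ Finset.Icc 1 (k-1), (1/(j:ℝ)) * (X^(2*j) + (X^(2*j))⁻¹)
        = (∑ i ∈ Finset.Ico 1 k, X^(2*i)/(i:ℝ)) + ∑ i ∈ Finset.Ico 1 k, ((X^2)⁻¹)^i/(i:ℝ) := by
      have h1 : Finset.Icc 1 (k-1) = Finset.Ico 1 k := by
        rw [← Finset.Ico_add_one_right_eq_Icc]
        congr 1
        omega
      rw [h1, ← Finset.sum_add_distrib]
      apply Finset.sum_congr rfl
      intro i hi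
      rw [Finset.mem_Ico] at hi
      have hi0 : ((i:ℝ)) ≠ 0 := Nat.cast_ne_zero.2 (by omega)
      rw [inv_pow, ← pow_mul]
      field_simp
    rw [h4k, hxk, hicc]
    have hlog : Real.log (1 - (X^2)⁻¹) = -(-Real.log (1 - (X^2)⁻¹)) := by ring
    rw [hlog]
    generalize (-Real.log (1 - (X^2)⁻¹)) = L
    generalize (∑ i ∈ Finset.Ico 1 k, ((X^2)⁻¹)^i/(i:ℝ)) = S1
    generalize (∑ i ∈ Finset.Ico 1 k, X^(2*i)/(i:ℝ)) = S2
    generalize ((X^2)⁻¹ : ℝ)^k = P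
    generalize ((X^2)⁻¹ : ℝ)^(2*k) = Q
    field_simp
    ring
end

section
/- For every integer k ≥ 1, 2·∑_{i≥1, i≠k} (-1)^i/((i-k)(i+k)) = (-1)^k/(2k²) + 1/k². -/
open Finset Filter Topology

theorem alternating_series_partial_fraction (k : ℕ) (hk : 1 ≤ k) :
    ∃ A : ℝ,
      HasSum (fun i : ℕ => if i = 0 ∨ i = k then 0 else
        (-1 : ℝ) ^ i / (((i : ℝ) - (k : ℝ)) * ((i : ℝ) + (k : ℝ)))) A ∧
      2 * A = (-1 : ℝ) ^ k / (2 * (k : ℝ) ^ 2) + 1 / (k : ℝ) ^ 2 := by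
  have hK0 : (0:ℝ) < (k:ℝ) := by exact_mod_cast Nat.pos_of_ne_zero (by omega)
  set K : ℝ := (k : ℝ) with hKdef
  set f : ℕ → ℝ := fun i => if i = 0 ∨ i = k then 0 else
      (-1 : ℝ) ^ i / (((i : ℝ) - K) * ((i : ℝ) + K)) with hfdef
  -- Summability
  have hsum : Summable f := by
    apply Summable.of_norm_bounded_eventually_nat (g := fun i => 2 * (1 / (i:ℝ)^2))
    · exact (Real.summable_one_div_nat_pow.2 one_lt_two).mul_left 2
    · filter_upwards [eventually_ge_atTop (2*k+1)] with i hi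
      have hik : 2*K + 1 ≤ (i:ℝ) := by
        have : ((2*k+1 : ℕ) : ℝ) ≤ i := by exact_mod_cast hi
        push_cast at this; linarith
      have hD : 0 < ((i:ℝ) - K) * ((i:ℝ) + K) := by nlinarith
      have h1 : ¬ (i = 0 ∨ i = k) := by omega
      simp only [hfdef, if_neg h1]
      rw [norm_div, norm_pow, norm_neg, norm_one, one_pow, Real.norm_eq_abs,
        abs_of_pos hD]
      have hi0 : (0:ℝ) < (i:ℝ) := by linarith
      have h2 : 2 * (1/(i:ℝ)^2) = 2/(i:ℝ)^2 := by ring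
      rw [h2, div_le_div_iff₀ hD (by positivity)]
      nlinarith [sq_nonneg ((i:ℝ) - 2*K)]
  -- the auxiliary sequence
  set u : ℕ → ℝ := fun i => if i = k then 0 else (-1:ℝ)^i / ((i:ℝ) - K) with hudef
  have hcast_ne : ∀ i : ℕ, i ≠ k → ((i:ℝ) - K) ≠ 0 := by
    intro i h
    have : (i:ℝ) ≠ K := by rw [hKdef]; exact_mod_cast h
    exact sub_ne_zero.2 this
  have hu2 : ∀ i : ℕ, u (i + 2*k) = (-1:ℝ)^i / ((i:ℝ) + K) := by
    intro i
    have h1 : i + 2*k ≠ k := by omega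
    simp only [hudef, if_neg h1]
    have hp : (-1:ℝ)^(i + 2*k) = (-1)^i := by
      rw [pow_add, pow_mul]; norm_num
    rw [hp]
    push_cast
    ring_nf
    rw [← hKdef]
    ring_nf
  -- the step decomposition
  have hstep : ∀ i : ℕ, f i = 1/(2*K) * (u i - u (i + 2*k))
      + ((if i = 0 then 1/K^2 else 0) + (if i = k then (-1:ℝ)^k/(4*K^2) else 0)) := by
    intro i
    rw [hu2 i]
    rcases eq_or_ne i 0 with rfl | hi0
    · have h0k : (0:ℕ) ≠ k := by omega
      simp only [hfdef, hudef]
      simp [h0k]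
      field_simp
      ring
    · rcases eq_or_ne i k with h | hik
      · subst h
        simp only [hfdef, hudef]
        simp [hi0]
        field_simp
        ring
      · have h1 : ¬ (i = 0 ∨ i = k) := by tauto
        simp only [hfdef, hudef, if_neg h1, if_neg hik, if_neg hi0]
        have h2 : ((i:ℝ) - K) ≠ 0 := hcast_ne i hik
        have h3 : ((i:ℝ) + K) ≠ 0 := by
          have : (0:ℝ) ≤ (i:ℝ) := Nat.cast_nonneg i
          intro hcon; linarith [hK0]
        field_simp
        ring
  -- partial sum formula for n ≥ k+1
  have hformula : ∀ n : ℕ, k + 1 ≤ n → ∑ i ∈ range n, f i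
      = 1/(2*K) * ((∑ i ∈ range (2*k), u i) - ∑ i ∈ range (2*k), u (n + i))
        + (1/K^2 + (-1:ℝ)^k/(4*K^2)) := by
    intro n hn
    rw [Finset.sum_congr rfl (fun i _ => hstep i), Finset.sum_add_distrib,
      Finset.sum_add_distrib, ← Finset.mul_sum, Finset.sum_sub_distrib]
    have htel : (∑ i ∈ range n, u i) - (∑ i ∈ range n, u (i + 2*k))
        = (∑ i ∈ range (2*k), u i) - ∑ i ∈ range (2*k), u (n + i) := by
      have h1 := Finset.sum_range_add u n (2*k)
      have h2 := Finset.sum_range_add u (2*k) n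
      have h3 : ∑ i ∈ range n, u (i + 2*k) = ∑ i ∈ range n, u (2*k + i) := by
        apply Finset.sum_congr rfl; intro i _; rw [add_comm]
      have h4 : n + 2*k = 2*k + n := by omega
      rw [h4] at h1
      rw [h1] at h2
      rw [h3]
      linarith
    rw [htel, Finset.sum_ite_eq' (range n) 0, Finset.sum_ite_eq' (range n) k,
      if_pos (Finset.mem_range.2 (by omega)), if_pos (Finset.mem_range.2 (by omega))]
  -- initial block sum
  have hS0 : ∑ i ∈ range (2*k), u i = -(1/K) := by
    have hT : ∑ j ∈ range (2*k+1), u j = 0 := by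
      have hrefl := Finset.sum_range_reflect u (2*k+1)
      have hneg : ∀ j ∈ range (2*k+1), u (2*k + 1 - 1 - j) = -u j := by
        intro j hj
        have hj' : j ≤ 2*k := by simpa [Nat.lt_succ_iff] using hj
        have hsimp : 2*k + 1 - 1 - j = 2*k - j := by omega
        rw [hsimp]
        rcases eq_or_ne j k with h | hjk
        · subst h
          have hkk : 2*j - j = j := by omega
          simp [hudef, hkk]
        · have h1 : 2*k - j ≠ k := by omega
          simp only [hudef, if_neg h1, if_neg hjk]
          have hc : ((2*k - j : ℕ) : ℝ) = 2*K - j := by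
            rw [Nat.cast_sub (by omega)]; push_cast; ring
          have hpj : ((-1:ℝ)^j) * ((-1:ℝ)^j) = 1 := by
            rw [← pow_add, ← two_mul, pow_mul]; norm_num
          have hp : (-1:ℝ)^(2*k - j) = (-1)^j := by
            have h5 : (-1:ℝ)^(2*k - j) * (-1)^j = 1 := by
              rw [← pow_add, Nat.sub_add_cancel (by omega), pow_mul]; norm_num
            calc (-1:ℝ)^(2*k-j) = (-1)^(2*k-j) * ((-1)^j * (-1)^j) := by rw [hpj, mul_one]
              _ = ((-1)^(2*k-j) * (-1)^j) * (-1)^j := by ring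
              _ = (-1)^j := by rw [h5, one_mul]
          rw [hc, hp]
          have h2 : ((j:ℝ) - K) ≠ 0 := hcast_ne j hjk
          have h3 : (2*K - (j:ℝ) - K) ≠ 0 := by
            intro h
            apply hcast_ne j hjk
            linarith
          field_simp
          ring
      have hhalf : ∑ j ∈ range (2*k+1), u j = -∑ j ∈ range (2*k+1), u j := by
        conv_lhs => rw [← hrefl, Finset.sum_congr rfl hneg]
        rw [Finset.sum_neg_distrib]
      linarith
    have hsucc := Finset.sum_range_succ u (2*k)
    rw [hT] at hsucc
    have hu2k : u (2*k) = 1/K := by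
      have h1 : 2*k ≠ k := by omega
      simp only [hudef, if_neg h1]
      rw [pow_mul]
      push_cast
      norm_num
      rw [two_mul]
      ring_nf
      linarith [hKdef]
    rw [hu2k] at hsucc
    linarith
  -- the tail tends to zero
  have hR : Tendsto (fun n => ∑ i ∈ range (2*k), u (n + i)) atTop (𝓝 0) := by
    rw [show (0:ℝ) = ∑ i ∈ range (2*k), (0:ℝ) by simp]
    refine tendsto_finset_sum _ (fun i _ => ?_)
    apply squeeze_zero_norm' (a := fun n : ℕ => 1/((n:ℝ) - K))
    · filter_upwards [eventually_ge_atTop (k+1)] with n hn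
      have h1 : n + i ≠ k := by omega
      have hnK : K + 1 ≤ (n:ℝ) := by
        have : ((k+1 : ℕ) : ℝ) ≤ n := by exact_mod_cast hn
        push_cast at this; linarith
      simp only [hudef, if_neg h1]
      rw [norm_div, norm_pow, norm_neg, norm_one, one_pow, Real.norm_eq_abs]
      have hpos : (0:ℝ) < ((n + i : ℕ):ℝ) - K := by push_cast; linarith
      rw [abs_of_pos hpos]
      apply one_div_le_one_div_of_le (by linarith)
      push_cast; linarith
    · have h : Tendsto (fun n : ℕ => (n:ℝ) - K) atTop atTop :=
        tendsto_atTop_add_const_right _ (-K) tendsto_natCast_atTop_atTop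
      simpa [one_div, Pi.inv_def] using h.inv_tendsto_atTop
  -- the limit of the partial sums
  set L : ℝ := 1/(2*K) * (-(1/K) - 0) + (1/K^2 + (-1:ℝ)^k/(4*K^2)) with hLdef
  have hLim : Tendsto (fun n => ∑ i ∈ range n, f i) atTop (𝓝 L) := by
    have h1 : Tendsto (fun n => 1/(2*K) * ((∑ i ∈ range (2*k), u i)
        - ∑ i ∈ range (2*k), u (n + i)) + (1/K^2 + (-1:ℝ)^k/(4*K^2))) atTop (𝓝 L) := by
      rw [hS0, hLdef]
      exact ((tendsto_const_nhds.sub hR).const_mul _).add tendsto_const_nhds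
    apply h1.congr'
    filter_upwards [eventually_ge_atTop (k+1)] with n hn
    exact (hformula n hn).symm
  have hA : HasSum f L := by
    have h := hsum.hasSum
    have heq := tendsto_nhds_unique h.tendsto_sum_nat hLim
    rwa [heq] at h
  refine ⟨L, hA, ?_⟩
  rw [hLdef]
  have hKne : K ≠ 0 := ne_of_gt hK0
  field_simp
  ring
end

section
/- For all reals c > 0 and ε > 0, the improper double integral ∫_{sinh(ε/2)}^{∞} (ds₀/s₀) ∫_{s₀}^{(s₀² + c²)/s₀} (ds₁/s₁) converges and equals -(1/2)·Li₂(-c²/sinh²(ε/2)). -/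
open MeasureTheory

/-- The real dilogarithm via its integral representation, valid in particular on
negative real arguments. -/
noncomputable def Li2 (x : ℝ) : ℝ :=
  -∫ t in (0:ℝ)..x, Real.log (1 - t) / t

lemma li2_bound_aux {t : ℝ} (ht : t ≤ 0) : ‖Real.log (1 - t) / t‖ ≤ 1 := by
  rcases eq_or_lt_of_le ht with rfl | ht'
  · simp
  · have h1 : (0:ℝ) < 1 - t := by linarith
    have hlog0 : 0 ≤ Real.log (1 - t) := Real.log_nonneg (by linarith)
    have hlog1 : Real.log (1 - t) ≤ -t := by
      have := Real.log_le_sub_one_of_pos h1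
      linarith
    rw [Real.norm_eq_abs, abs_div, abs_of_nonneg hlog0, abs_of_neg ht']
    rw [div_le_one (by linarith)]
    exact hlog1

lemma li2_integrable {x : ℝ} (hx : x ≤ 0) :
    IntervalIntegrable (fun t => Real.log (1 - t) / t) volume 0 x := by
  rw [intervalIntegrable_iff]
  apply Measure.integrableOn_of_bounded (M := 1)
  · exact (measure_Ioc_lt_top).ne
  · exact ((Real.measurable_log.comp (measurable_const.sub measurable_id)).div
      measurable_id).aestronglyMeasurable
  · filter_upwards [ae_restrict_mem measurableSet_Ioc] with t htmem
    rw [Set.uIoc_of_ge hx] at htmem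
    exact li2_bound_aux htmem.2

lemma li2_hasDerivAt {x : ℝ} (hx : x < 0) :
    HasDerivAt Li2 (-(Real.log (1 - x) / x)) x := by
  have hcont : ContinuousAt (fun t => Real.log (1 - t) / t) x := by
    apply ContinuousAt.div
    · exact (Real.continuousAt_log (by linarith)).comp
        (continuousAt_const.sub continuousAt_id)
    · exact continuousAt_id
    · exact hx.ne
  have h1 : HasDerivAt (fun u => ∫ t in (0:ℝ)..u, Real.log (1 - t) / t)
      (Real.log (1 - x) / x) x :=
    intervalIntegral.integral_hasDerivAt_right (li2_integrable hx.le)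
      (ContinuousOn.stronglyMeasurableAtFilter isOpen_Iio
        (fun t ht => (by
          apply ContinuousAt.continuousWithinAt
          apply ContinuousAt.div
          · exact (Real.continuousAt_log (by simp at ht; linarith)).comp
              (continuousAt_const.sub continuousAt_id)
          · exact continuousAt_id
          · exact ne_of_lt ht)) x hx)
      hcont
  exact h1.neg

lemma li2_abs_le {x : ℝ} (hx : x ≤ 0) : |Li2 x| ≤ |x| := by
  have := intervalIntegral.norm_integral_le_of_norm_le_const
    (C := 1) (a := (0:ℝ)) (b := x) (f := fun t => Real.log (1 - t) / t)
    (fun t ht => by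
      rw [Set.uIoc_of_ge hx] at ht
      exact li2_bound_aux ht.2)
  simpa [Li2, abs_sub_comm] using this

theorem klein_bottle_double_integral (c ε : ℝ) (hc : 0 < c) (hε : 0 < ε) :
    IntegrableOn
      (fun s₀ : ℝ => (1 / s₀) * ∫ s₁ in s₀..((s₀ ^ 2 + c ^ 2) / s₀), 1 / s₁)
      (Set.Ioi (Real.sinh (ε / 2))) ∧
    ∫ s₀ in Set.Ioi (Real.sinh (ε / 2)),
        (1 / s₀) * ∫ s₁ in s₀..((s₀ ^ 2 + c ^ 2) / s₀), 1 / s₁ =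
      -(1 / 2) * Li2 (-(c ^ 2 / Real.sinh (ε / 2) ^ 2)) := by
  set a := Real.sinh (ε / 2) with ha
  have ha0 : 0 < a := Real.sinh_pos_iff.mpr (by linarith)
  set g : ℝ → ℝ := fun s => (1 / 2) * Li2 (-(c ^ 2 / s ^ 2)) with hg
  set F : ℝ → ℝ := fun s₀ => (1 / s₀) * ∫ s₁ in s₀..((s₀ ^ 2 + c ^ 2) / s₀), 1 / s₁ with hF
  -- the integrand equals (1/s) * log((s²+c²)/s²) for s > 0
  have hFval : ∀ s : ℝ, 0 < s → F s = (1 / s) * Real.log ((s ^ 2 + c ^ 2) / s ^ 2) := by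
    intro s hs
    have hpos : 0 < (s ^ 2 + c ^ 2) / s := by positivity
    have h0 : (0:ℝ) ∉ Set.uIcc s ((s ^ 2 + c ^ 2) / s) := by
      intro h0
      rcases Set.mem_uIcc.mp h0 with ⟨h1, _⟩ | ⟨h1, _⟩ <;> nlinarith
    simp only [hF]
    rw [integral_one_div h0]
    congr 1
    rw [div_div, sq]
  -- derivative of g
  have hgderiv : ∀ s : ℝ, 0 < s → HasDerivAt g (F s) s := by
    intro s hs
    have hxneg : -(c ^ 2 / s ^ 2) < 0 := by
      have : 0 < c ^ 2 / s ^ 2 := by positivity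
      linarith
    have hinner : HasDerivAt (fun u : ℝ => -(c ^ 2 / u ^ 2)) (2 * c ^ 2 / s ^ 3) s := by
      have h1 : HasDerivAt (fun u : ℝ => u ^ 2) (2 * s) s := by
        simpa using hasDerivAt_pow 2 s
      have h2 : HasDerivAt (fun u : ℝ => c ^ 2 / u ^ 2)
          (-(c ^ 2) * (2 * s) / (s ^ 2) ^ 2) s := by
        exact ((hasDerivAt_const s (c ^ 2)).div h1 (by positivity)).congr_deriv (by ring)
      have := h2.neg
      refine this.congr_deriv ?_
      field_simp
    have hchain := (li2_hasDerivAt hxneg).comp s hinner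
    have := hchain.const_mul ((1:ℝ) / 2)
    refine this.congr_deriv ?_ |>.congr_deriv rfl
    rw [hFval s hs]
    have hlogarg : (s ^ 2 + c ^ 2) / s ^ 2 = 1 - -(c ^ 2 / s ^ 2) := by
      field_simp
      ring
    rw [hlogarg]
    field_simp
  -- g tends to 0 at infinity
  have hgtend : Filter.Tendsto g Filter.atTop (nhds 0) := by
    apply squeeze_zero_norm (a := fun s : ℝ => (1 / 2) * (c ^ 2 / s ^ 2))
    · intro s
      rcases le_or_gt s 0 with hs | hs
      · -- still need bound; for s ≤ 0, c^2/s^2 ≥ 0, the argument is ≤ 0 anyway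
        rw [hg]
        simp only [Real.norm_eq_abs, abs_mul]
        rw [abs_of_nonneg (by norm_num : (0:ℝ) ≤ 1/2)]
        have h1 : |Li2 (-(c ^ 2 / s ^ 2))| ≤ |(-(c ^ 2 / s ^ 2))| := li2_abs_le (by
          have : (0:ℝ) ≤ c ^ 2 / s ^ 2 := by positivity
          linarith)
        have h2 : |(-(c ^ 2 / s ^ 2))| = c ^ 2 / s ^ 2 := by
          rw [abs_neg, abs_of_nonneg (by positivity)]
        nlinarith [abs_nonneg (Li2 (-(c ^ 2 / s ^ 2)))]
      · rw [hg]
        simp only [Real.norm_eq_abs, abs_mul]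
        rw [abs_of_nonneg (by norm_num : (0:ℝ) ≤ 1/2)]
        have h1 : |Li2 (-(c ^ 2 / s ^ 2))| ≤ |(-(c ^ 2 / s ^ 2))| := li2_abs_le (by
          have : (0:ℝ) ≤ c ^ 2 / s ^ 2 := by positivity
          linarith)
        have h2 : |(-(c ^ 2 / s ^ 2))| = c ^ 2 / s ^ 2 := by
          rw [abs_neg, abs_of_nonneg (by positivity)]
        nlinarith [abs_nonneg (Li2 (-(c ^ 2 / s ^ 2)))]
    · have : Filter.Tendsto (fun s : ℝ => c ^ 2 / s ^ 2) Filter.atTop (nhds 0) := by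
        apply Filter.Tendsto.div_atTop tendsto_const_nhds
        exact Filter.tendsto_pow_atTop (by norm_num) |>.comp Filter.tendsto_id
      simpa using this.const_mul ((1:ℝ)/2)
  have hcont : ContinuousWithinAt g (Set.Ici a) a :=
    (hgderiv a ha0).continuousAt.continuousWithinAt
  have hderiv : ∀ x ∈ Set.Ioi a, HasDerivAt g (F x) x :=
    fun x hx => hgderiv x (ha0.trans hx)
  have hpos : ∀ x ∈ Set.Ioi a, 0 ≤ F x := by
    intro x hx
    have hx0 : 0 < x := ha0.trans hx
    rw [hFval x hx0]
    have : 0 ≤ Real.log ((x ^ 2 + c ^ 2) / x ^ 2) := by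
      apply Real.log_nonneg
      rw [le_div_iff₀ (by positivity)]
      nlinarith
    positivity
  constructor
  · exact integrableOn_Ioi_deriv_of_nonneg hcont hderiv hpos hgtend
  · have := integral_Ioi_of_hasDerivAt_of_nonneg hcont hderiv hpos hgtend
    rw [hF] at this
    rw [this, hg]
    ring
end

section
/- For every integer k ≥ 1 and every real ε > 0, set s = 2·sinh(ε/2). Then (-1)^k·U_k = 2·C_k, where U_k = (4/k)·log s + (4/k)·∑_{j=1}^{k-1} 1/j + ∑_{j=1}^{k} (s^{2j}/j²)·C(k+j-1, 2j-1), and C_k = 2·((-1)^k/k)·log s - (-1)^k/k² + ((-1)^k/(2k²))·(e^{kε} + e^{-kε}) + ((-1)^k/k)·∑_{m=1}^{k-1} (e^{mε} + e^{-mε})/m. -/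
open Finset


def bco (k j : ℕ) : ℕ := if j = 0 then 2 else (k+j-1).choose (2*j-1) + 2*((k+j-1).choose (2*j))

lemma bco_zero (k : ℕ) : bco k 0 = 2 := rfl

lemma bco_succ (k i : ℕ) : bco k (i+1) = (k+i).choose (2*i+1) + 2*((k+i).choose (2*i+2)) := by
  unfold bco
  have h1 : k + (i+1) - 1 = k + i := by omega
  have h2 : 2*(i+1) - 1 = 2*i+1 := by omega
  have h3 : 2*(i+1) = 2*i+2 := by omega
  simp [h1, h2, h3]

lemma bco_eq_zero {k j : ℕ} (h : k < j) : bco k j = 0 := by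
  obtain ⟨i, rfl⟩ : ∃ i, j = i + 1 := ⟨j - 1, by omega⟩
  rw [bco_succ, Nat.choose_eq_zero_of_lt (by omega), Nat.choose_eq_zero_of_lt (by omega)]

lemma pascal2 (n r : ℕ) :
    (n+2).choose (r+2) + 2*((n+2).choose (r+3)) + n.choose (r+2) + 2*(n.choose (r+3))
      = n.choose r + 2*(n.choose (r+1)) + 2*((n+1).choose (r+2)) + 4*((n+1).choose (r+3)) := by
  simp [Nat.choose_succ_succ]
  ring

lemma bco_rec (k i : ℕ) : bco (k+2) (i+1) + bco k (i+1) = bco (k+1) i + 2 * bco (k+1) (i+1) := by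
  cases i with
  | zero =>
      rw [bco_succ, bco_succ, bco_succ, bco_zero]
      simp [Nat.choose_succ_succ, Nat.choose_one_right]
      ring
  | succ m =>
      rw [bco_succ, bco_succ, bco_succ, bco_succ]
      have e1 : k + 2 + (m+1) = (k+m+1) + 2 := by omega
      have e2 : k + 1 + (m+1) = (k+m+1) + 1 := by omega
      have e3 : k + (m+1) = k+m+1 := by omega
      have e4 : 2*(m+1)+1 = (2*m+1)+2 := by omega
      have e5 : 2*(m+1)+2 = (2*m+1)+3 := by omega
      have e6 : 2*m+2 = (2*m+1)+1 := by omega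
      have e7 : k + 1 + m = k+m+1 := by omega
      rw [e1, e2, e3, e4, e5, e6, e7]
      have := pascal2 (k+m+1) (2*m+1)
      omega


lemma lemA (y : ℝ) (hy : y ≠ 0) : ∀ (k N : ℕ), k < N →
    y^k + y⁻¹^k = ∑ j ∈ range N, (bco k j : ℝ) * (y + y⁻¹ - 2)^j := by
  intro k
  induction k using Nat.twoStepInduction with
  | zero =>
      intro N hN
      rw [Finset.sum_eq_single 0]
      · simp [bco_zero]; norm_num
      · intro j _ hj
        rw [bco_eq_zero (by omega)]; simp
      · intro h; simp at h; omega
  | one =>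
      intro N hN
      rw [← Finset.sum_subset (Finset.range_subset_range.2 (show 2 ≤ N by omega))
        (fun j _ hj => by rw [bco_eq_zero (show 1 < j by simp at hj ⊢; omega)]; simp)]
      rw [Finset.sum_range_succ, Finset.sum_range_succ, Finset.sum_range_zero, bco_zero, bco_succ]
      norm_num
  | more k IH0 IH1 =>
      intro N hN
      obtain ⟨M, rfl⟩ : ∃ M, N = M + 1 := ⟨N - 1, by omega⟩
      set z := y + y⁻¹ - 2 with hzdef
      have H1 := IH1 (M+1) (by omega)
      have H0 := IH0 (M+1) (by omega)
      have key : y^(k+2) + y⁻¹^(k+2) = (y + y⁻¹) * (y^(k+1) + y⁻¹^(k+1)) - (y^k + y⁻¹^k) := by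
        have hinv : y * y⁻¹ = 1 := mul_inv_cancel₀ hy
        linear_combination (-(y^k + y⁻¹^k)) * hinv
      rw [key, H1, H0, sub_eq_iff_eq_add]
      have expand : (y + y⁻¹) * ∑ j ∈ range (M+1), (bco (k+1) j : ℝ) * z^j
          = (∑ j ∈ range (M+1), (bco (k+1) j : ℝ) * z^(j+1))
            + ∑ j ∈ range (M+1), 2*(bco (k+1) j : ℝ) * z^j := by
        rw [← Finset.sum_add_distrib, Finset.mul_sum]
        refine Finset.sum_congr rfl fun j _ => ?_
        rw [hzdef]; ring
      have h1 : ∑ j ∈ range (M+1), (bco (k+1) j:ℝ) * z^(j+1)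
          = ∑ j ∈ range M, (bco (k+1) j:ℝ) * z^(j+1) := by
        rw [Finset.sum_range_succ, bco_eq_zero (show k+1 < M by omega)]
        simp
      have h2 : ∑ j ∈ range (M+1), 2*(bco (k+1) j:ℝ) * z^j
          = (∑ j ∈ range M, 2*(bco (k+1) (j+1):ℝ) * z^(j+1)) + 4 := by
        rw [Finset.sum_range_succ']
        simp [bco_zero]
        norm_num
      have h3 : (∑ j ∈ range (M+1), (bco (k+2) j:ℝ)*z^j) + ∑ j ∈ range (M+1), (bco k j:ℝ)*z^j
          = (∑ j ∈ range M, ((bco (k+1) j:ℝ)*z^(j+1) + 2*(bco (k+1) (j+1):ℝ)*z^(j+1))) + 4 := by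
        rw [← Finset.sum_add_distrib, Finset.sum_range_succ']
        congr 1
        · refine Finset.sum_congr rfl fun j _ => ?_
          have hc : (bco (k+2) (j+1) : ℝ) + (bco k (j+1) : ℝ)
              = (bco (k+1) j : ℝ) + 2 * (bco (k+1) (j+1) : ℝ) := by
            exact_mod_cast congrArg (Nat.cast : ℕ → ℝ) (bco_rec k j)
          rw [← add_mul, hc]; ring
        · simp [bco_zero]; norm_num
      rw [expand, h1, h2, h3, Finset.sum_add_distrib]
      ring


-- absorption: (i+1) * bco k (i+1) = k * C(k+i, 2i+1)
lemma lemL1 (k i : ℕ) : ((i:ℝ)+1) * (bco k (i+1) : ℝ) = (k:ℝ) * ((k+i).choose (2*i+1) : ℝ) := by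
  have hn := Nat.add_one_mul_choose_eq (k+i) (2*i+1)
  rw [Nat.choose_succ_succ] at hn
  have h3 : ((k:ℝ)+i+1) * ((k+i).choose (2*i+1) : ℝ)
      = (((k+i).choose (2*i+1) : ℝ) + ((k+i).choose (2*i+1+1) : ℝ)) * (2*i+1+1) := by
    exact_mod_cast hn
  rw [bco_succ]
  push_cast
  have e : ((k+i).choose (2*i+2) : ℝ) = ((k+i).choose (2*i+1+1) : ℝ) := by norm_num
  rw [e]
  linear_combination (-1 : ℝ) * h3

-- 2(i+1) C(k+i+1, 2i+2) = (k+i+1) C(k+i, 2i+1)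
lemma lemL2 (k i : ℕ) : 2*((i:ℝ)+1) * ((k+i+1).choose (2*i+2) : ℝ)
    = ((k:ℝ)+i+1) * ((k+i).choose (2*i+1) : ℝ) := by
  have hn := Nat.add_one_mul_choose_eq (k+i) (2*i+1)
  have h3 : ((k:ℝ)+i+1) * ((k+i).choose (2*i+1) : ℝ)
      = ((k+i+1).choose (2*i+1+1) : ℝ) * (2*i+1+1) := by exact_mod_cast hn
  have e : ((k+i+1).choose (2*i+2) : ℝ) = ((k+i+1).choose (2*i+1+1) : ℝ) := by norm_num
  rw [e]
  linear_combination -h3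

lemma hockey (i : ℕ) : ∀ k : ℕ, ∑ m ∈ Icc 1 k, ((m+i).choose (2*i+1)) = (k+i+1).choose (2*i+2) := by
  intro k
  induction k with
  | zero =>
      simp
      exact (Nat.choose_eq_zero_of_lt (by omega)).symm
  | succ n ih =>
      rw [Finset.sum_Icc_succ_top (by omega), ih]
      have e1 : n+1+i = n+i+1 := by omega
      have e3 : n+1+i+1 = n+i+1+1 := by omega
      have e2 : 2*i+2 = 2*i+1+1 := by omega
      rw [e1, e2]
      have hp := Nat.choose_succ_succ' (n+i+1) (2*i+1)
      omega


lemma lemP (m k : ℕ) (hm : 1 ≤ m) (hmk : m ≤ k) (y : ℝ) (hy : y ≠ 0) :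
    (y^m + y⁻¹^m - 2)/(m:ℝ)
      = ∑ j ∈ Icc 1 k, ((y+y⁻¹-2)^j / (j:ℝ)) * ((m+j-1).choose (2*j-1) : ℝ) := by
  have hA := lemA y hy m (k+1) (by omega)
  have hm0 : (m:ℝ) ≠ 0 := by positivity
  have split : ∑ j ∈ range (k+1), (bco m j : ℝ) * (y+y⁻¹-2)^j
      = 2 + ∑ j ∈ Icc 1 k, (bco m j:ℝ) * (y+y⁻¹-2)^j := by
    rw [Finset.range_eq_Ico, Finset.sum_eq_sum_Ico_succ_bot (by omega), Finset.Ico_add_one_right_eq_Icc]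
    simp [bco_zero]
  rw [split] at hA
  have hsum : (m:ℝ) * ∑ j ∈ Icc 1 k, ((y+y⁻¹-2)^j / (j:ℝ)) * ((m+j-1).choose (2*j-1) : ℝ)
      = ∑ j ∈ Icc 1 k, (bco m j:ℝ) * (y+y⁻¹-2)^j := by
    rw [Finset.mul_sum]
    refine Finset.sum_congr rfl fun j hj => ?_
    simp only [Finset.mem_Icc] at hj
    obtain ⟨i, rfl⟩ : ∃ i, j = i + 1 := ⟨j - 1, by omega⟩
    have e1 : m+(i+1)-1 = m+i := by omega
    have e2 : 2*(i+1)-1 = 2*i+1 := by omega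
    rw [e1, e2]
    have hL := lemL1 m i
    have hi0 : ((i:ℝ)+1) ≠ 0 := by positivity
    push_cast
    generalize (y+y⁻¹-2)^(i+1) = w
    field_simp
    linear_combination (-w) * hL
  rw [div_eq_iff hm0]
  linarith [hA, hsum]

lemma lemM (k : ℕ) (hk : 1 ≤ k) (y : ℝ) (hy : y ≠ 0) :
    (k:ℝ) * ∑ j ∈ Icc 1 k, ((y+y⁻¹-2)^j / (j:ℝ)^2) * ((k+j-1).choose (2*j-1):ℝ)
      = 2 * (∑ m ∈ Icc 1 k, (y^m + y⁻¹^m - 2)/(m:ℝ)) - (y^k + y⁻¹^k - 2)/(k:ℝ) := by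
  have hswap : ∑ m ∈ Icc 1 k, (y^m + y⁻¹^m - 2)/(m:ℝ)
      = ∑ j ∈ Icc 1 k, ((y+y⁻¹-2)^j / (j:ℝ)) * ((k+j).choose (2*j) : ℝ) := by
    have h1 : ∑ m ∈ Icc 1 k, (y^m + y⁻¹^m - 2)/(m:ℝ)
        = ∑ m ∈ Icc 1 k, ∑ j ∈ Icc 1 k, ((y+y⁻¹-2)^j / (j:ℝ)) * ((m+j-1).choose (2*j-1) : ℝ) := by
      refine Finset.sum_congr rfl fun m hm => ?_
      simp only [Finset.mem_Icc] at hm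
      exact lemP m k hm.1 hm.2 y hy
    rw [h1, Finset.sum_comm]
    refine Finset.sum_congr rfl fun j hj => ?_
    simp only [Finset.mem_Icc] at hj
    obtain ⟨i, rfl⟩ : ∃ i, j = i + 1 := ⟨j - 1, by omega⟩
    rw [← Finset.mul_sum]
    have e3 : ∑ m ∈ Icc 1 k, ((m+(i+1)-1).choose (2*(i+1)-1) : ℝ)
        = ((k+(i+1)).choose (2*(i+1)) : ℝ) := by
      have e1 : ∀ m, 1 ≤ m → m+(i+1)-1 = m+i := fun m hm => by omega
      have e2 : 2*(i+1)-1 = 2*i+1 := by omega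
      rw [← Nat.cast_sum]
      have : ∑ m ∈ Icc 1 k, ((m+(i+1)-1).choose (2*(i+1)-1))
          = ∑ m ∈ Icc 1 k, ((m+i).choose (2*i+1)) := by
        refine Finset.sum_congr rfl fun m hm => ?_
        simp only [Finset.mem_Icc] at hm
        rw [e1 m hm.1, e2]
      rw [this, hockey i k]
      congr 1 <;> omega
    rw [e3]
  have hPk := lemP k k hk le_rfl y hy
  rw [hswap, hPk, Finset.mul_sum, Finset.mul_sum, ← Finset.sum_sub_distrib]
  refine Finset.sum_congr rfl fun j hj => ?_
  simp only [Finset.mem_Icc] at hj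
  obtain ⟨i, rfl⟩ : ∃ i, j = i + 1 := ⟨j - 1, by omega⟩
  have e1 : k+(i+1)-1 = k+i := by omega
  have e2 : 2*(i+1)-1 = 2*i+1 := by omega
  have e4 : k+(i+1) = k+i+1 := by omega
  have e5 : 2*(i+1) = 2*i+2 := by omega
  rw [e1, e2, e4, e5]
  have hL := lemL2 k i
  have hi0 : ((i:ℝ)+1) ≠ 0 := by positivity
  push_cast
  generalize (y+y⁻¹-2)^(i+1) = w
  field_simp
  linear_combination (-w) * hL


lemma lemKey (k : ℕ) (hk : 1 ≤ k) (y : ℝ) (hy : y ≠ 0) :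
    (4/(k:ℝ)) * (∑ j ∈ Icc 1 (k-1), (1/(j:ℝ)))
      + ∑ j ∈ Icc 1 k, ((y+y⁻¹-2)^j / (j:ℝ)^2) * ((k+j-1).choose (2*j-1):ℝ)
    = -2/(k:ℝ)^2 + (y^k + y⁻¹^k)/(k:ℝ)^2
      + (2/(k:ℝ)) * ∑ m ∈ Icc 1 (k-1), (y^m + y⁻¹^m)/(m:ℝ) := by
  have hM := lemM k hk y hy
  obtain ⟨K, rfl⟩ : ∃ K, k = K + 1 := ⟨k - 1, by omega⟩
  have e1 : (K+1) - 1 = K := by omega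
  have hcast : ((K+1 : ℕ) : ℝ) = (K:ℝ)+1 := by push_cast; ring
  rw [e1]
  have htop : ∑ m ∈ Icc 1 (K+1), (y^m + y⁻¹^m - 2)/(m:ℝ)
      = (∑ m ∈ Icc 1 K, (y^m + y⁻¹^m - 2)/(m:ℝ)) + (y^(K+1) + y⁻¹^(K+1) - 2)/((K:ℝ)+1) := by
    rw [Finset.sum_Icc_succ_top (by omega), hcast]
  have hsplit : ∑ m ∈ Icc 1 K, (y^m + y⁻¹^m - 2)/(m:ℝ)
      = (∑ m ∈ Icc 1 K, (y^m + y⁻¹^m)/(m:ℝ)) - 2 * ∑ m ∈ Icc 1 K, (1/(m:ℝ)) := by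
    rw [Finset.mul_sum, ← Finset.sum_sub_distrib]
    refine Finset.sum_congr rfl fun m hm => ?_
    rw [sub_div, div_eq_mul_one_div (2:ℝ) (m:ℝ)]
  rw [htop, hsplit, hcast] at hM
  set S := ∑ j ∈ Icc 1 (K+1), ((y+y⁻¹-2)^j / (j:ℝ)^2) * (((K+1)+j-1).choose (2*j-1):ℝ) with hS
  set A1 := ∑ m ∈ Icc 1 K, (1/(m:ℝ)) with hA1
  set A2 := ∑ m ∈ Icc 1 K, (y^m + y⁻¹^m)/(m:ℝ) with hA2
  set E := y^(K+1) + y⁻¹^(K+1) with hE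
  rw [hcast]
  clear_value S A1 A2 E
  have hkk : ((K:ℝ)+1) ≠ 0 := by positivity
  field_simp at hM
  have hSval : S = (2*(A2 - 2*A1)*((K:ℝ)+1) + (E-2))/((K:ℝ)+1)^2 := by
    rw [eq_div_iff (pow_ne_zero 2 hkk)]
    ring_nf
    ring_nf at hM
    linarith [hM]
  rw [hSval]
  field_simp
  ring


theorem U_eq_two_C (k : ℕ) (hk : 1 ≤ k) (ε : ℝ) (hε : 0 < ε) :
    (-1 : ℝ) ^ k *
        ((4 / (k : ℝ)) * Real.log (2 * Real.sinh (ε / 2)) +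
          (4 / (k : ℝ)) * ∑ j ∈ Finset.Icc 1 (k - 1), (1 / (j : ℝ)) +
          ∑ j ∈ Finset.Icc 1 k,
            ((2 * Real.sinh (ε / 2)) ^ (2 * j) / (j : ℝ) ^ 2) *
              (Nat.choose (k + j - 1) (2 * j - 1) : ℝ)) =
      2 *
        (2 * ((-1 : ℝ) ^ k / (k : ℝ)) * Real.log (2 * Real.sinh (ε / 2)) -
          (-1 : ℝ) ^ k / (k : ℝ) ^ 2 +
          ((-1 : ℝ) ^ k / (2 * (k : ℝ) ^ 2)) *
            (Real.exp ((k : ℝ) * ε) + Real.exp (-(k : ℝ) * ε)) +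
          ((-1 : ℝ) ^ k / (k : ℝ)) *
            ∑ m ∈ Finset.Icc 1 (k - 1),
              (Real.exp ((m : ℝ) * ε) + Real.exp (-(m : ℝ) * ε)) / (m : ℝ)) := by
  set y := Real.exp ε with hy'
  have hy : y ≠ 0 := (Real.exp_pos ε).ne'
  have h0 : Real.exp (ε/2) ≠ 0 := (Real.exp_pos _).ne'
  have husq : Real.exp (ε/2)^2 = y := by
    rw [sq, ← Real.exp_add, hy']
    norm_num
  have hz : (2 * Real.sinh (ε/2))^2 = y + y⁻¹ - 2 := by
    rw [← husq, Real.sinh_eq, Real.exp_neg]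
    field_simp
    ring
  have hexp : ∀ m : ℕ, Real.exp ((m:ℝ)*ε) = y^m := fun m => Real.exp_nat_mul ε m
  have hexp' : ∀ m : ℕ, Real.exp (-(m:ℝ)*ε) = y⁻¹^m := by
    intro m
    rw [show -(m:ℝ)*ε = (m:ℝ)*(-ε) by ring, Real.exp_nat_mul, Real.exp_neg]
  have hsum1 : ∑ j ∈ Finset.Icc 1 k, ((2 * Real.sinh (ε / 2)) ^ (2 * j) / (j : ℝ) ^ 2) *
              (Nat.choose (k + j - 1) (2 * j - 1) : ℝ)
      = ∑ j ∈ Icc 1 k, ((y+y⁻¹-2)^j / (j:ℝ)^2) * ((k+j-1).choose (2*j-1):ℝ) := by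
    refine Finset.sum_congr rfl fun j _ => ?_
    rw [pow_mul, hz]
  have hsum2 : ∑ m ∈ Finset.Icc 1 (k - 1), (Real.exp ((m : ℝ) * ε) + Real.exp (-(m : ℝ) * ε)) / (m : ℝ)
      = ∑ m ∈ Icc 1 (k-1), (y^m + y⁻¹^m)/(m:ℝ) := by
    refine Finset.sum_congr rfl fun m _ => ?_
    rw [hexp, hexp']
  rw [hsum1, hsum2, hexp k, hexp' k]
  linear_combination ((-1:ℝ)^k) * lemKey k hk y hy
end
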